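/- arXiv:2208.13098 — 7 statements merged into one kernel-verified Lean document; each statement's English description precedes it below -/
import Mathlib

section
/- The weighted adjacency matrix A of L_N(q) satisfies A y^{↓↓} = ((q^{dim y} - q^{N - dim y})/(q-1)) y^{↓↓} + Σ_{z covers y} z^{↓↓} for every subspace y. -/
/-!
Evaluate both sides at a subspace `x`. If `x ≤ y`, the left side is the number of hyperplanes of
`x` plus `q ^ dim x` times the number of subspaces covering `x` inside `y`, and the right side is
the scalar plus the number of subspaces covering `y`. Each count is a `q`-integer
`[k] = (q ^ k - 1) / (q - 1)`: the covers of `a` inside `b` are counted by fibring the vectors of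
`b \ a` over them, and the hyperplanes of `x` are, by duality, the covers of its annihilator.
The identity is then `[dim x] + q ^ dim x [dim y - dim x] = [dim y]`. If `x ≰ y`, the only
candidates are `x ⊓ y` below and `x ⊔ y` above, and by modularity `x ⊓ y ⋖ x ↔ y ⋖ x ⊔ y`.
-/

open scoped Classical
open Module

theorem Submodule.covBy_iff_finrank_eq_add_one {K V : Type*} [DivisionRing K] [AddCommGroup V]
    [Module K V] [FiniteDimensional K V] {z x : Submodule K V} :
    z ⋖ x ↔ z ≤ x ∧ finrank K x = finrank K z + 1 := by
  constructor
  · intro h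
    obtain ⟨v, hvx, hvz⟩ := SetLike.exists_of_lt h.lt
    have hle : K ∙ v ⊔ z ≤ x := sup_le ((span_singleton_le_iff_mem v x).2 hvx) h.le
    have heq : K ∙ v ⊔ z = x :=
      (h.eq_or_eq le_sup_right hle).resolve_left (covBy_span_singleton_sup hvz).lt.ne'
    refine ⟨h.le, ?_⟩
    rw [← heq, sup_comm, finrank_sup_span_singleton hvz]
  · rintro ⟨hle, hrank⟩
    refine ⟨lt_of_le_of_ne hle (by rintro rfl; omega), fun w hzw hwx => ?_⟩
    have := finrank_lt_finrank_of_lt hzw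
    have := finrank_lt_finrank_of_lt hwx
    omega

theorem Submodule.covBy_and_le_and_mem_iff {K V : Type*} [DivisionRing K] [AddCommGroup V]
    [Module K V] {a b z : Submodule K V} {v : V} (hab : a ≤ b) (hvb : v ∈ b) (hva : v ∉ a) :
    (a ⋖ z ∧ z ≤ b) ∧ v ∈ z ↔ z = K ∙ v ⊔ a := by
  constructor
  · rintro ⟨⟨haz, -⟩, hvz⟩
    have hle : K ∙ v ⊔ a ≤ z := sup_le ((span_singleton_le_iff_mem v z).2 hvz) haz.le
    exact ((haz.eq_or_eq le_sup_right hle).resolve_left (covBy_span_singleton_sup hva).lt.ne').symm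
  · rintro rfl
    exact ⟨⟨covBy_span_singleton_sup hva, sup_le ((span_singleton_le_iff_mem v b).2 hvb) hab⟩,
      mem_sup_left (mem_span_singleton_self v)⟩

theorem natCard_covBy_inf_eq_natCard_covBy_sup {α : Type*} [Lattice α] [IsModularLattice α]
    {x y : α} (hxy : ¬ x ≤ y) :
    Nat.card {z // z ⋖ x ∧ z ≤ y} = Nat.card {z // y ⋖ z ∧ x ≤ z} := by
  have hmod : x ⊓ y ⋖ x ↔ y ⋖ x ⊔ y := by
    refine ⟨IsUpperModularLattice.covBy_sup_of_inf_covBy, fun h => ?_⟩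
    rw [sup_comm] at h
    simpa only [inf_comm] using IsLowerModularLattice.inf_covBy_of_covBy_sup h
  have below (z : α) : z ⋖ x ∧ z ≤ y ↔ z = x ⊓ y ∧ x ⊓ y ⋖ x := by
    constructor
    · rintro ⟨hzx, hzy⟩
      obtain rfl := ((hzx.eq_or_eq (le_inf hzx.le hzy) inf_le_left).resolve_right
        (inf_eq_left.not.2 hxy)).symm
      exact ⟨rfl, hzx⟩
    · rintro ⟨rfl, h⟩
      exact ⟨h, inf_le_right⟩
  have above (z : α) : y ⋖ z ∧ x ≤ z ↔ z = x ⊔ y ∧ x ⊓ y ⋖ x := by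
    rw [hmod]
    constructor
    · rintro ⟨hyz, hxz⟩
      obtain rfl := ((hyz.eq_or_eq le_sup_right (sup_le hxz hyz.le)).resolve_left
        (sup_eq_right.not.2 hxy)).symm
      exact ⟨rfl, hyz⟩
    · rintro ⟨rfl, h⟩
      exact ⟨h, le_sup_left⟩
  rw [Nat.card_congr (Equiv.subtypeEquivRight below),
    Nat.card_congr (Equiv.subtypeEquivRight above)]
  by_cases h : x ⊓ y ⋖ x <;> simp [h]

section FiniteField

variable {K V : Type*} [Field K] [Fintype K] [AddCommGroup V] [Module K V]

local notation "q" => Fintype.card K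

open Finset

theorem Submodule.card_filter_mem_eq [Fintype V] (z : Submodule K V) :
    #{v : V | v ∈ z} = q ^ finrank K z := by
  rw [← Fintype.card_subtype, card_eq_pow_finrank (K := K)]

theorem Submodule.card_filter_mem_and_notMem_add [Fintype V] {a z : Submodule K V} (h : a ≤ z) :
    #{v : V | v ∈ z ∧ v ∉ a} + q ^ finrank K a = q ^ finrank K z := by
  have hsub : ({v | v ∈ a} : Finset V) ⊆ ({v | v ∈ z} : Finset V) :=
    monotone_filter_right _ fun v _ hv => h hv
  rw [← card_filter_mem_eq, ← card_filter_mem_eq, ← card_sdiff_add_card_eq_card hsub,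
    ← filter_and_not]

variable [FiniteDimensional K V]

theorem Submodule.natCard_covBy_and_le {a b : Submodule K V} (hab : a ≤ b) :
    (q - 1) * Nat.card {z // a ⋖ z ∧ z ≤ b} + 1 = q ^ (finrank K b - finrank K a) := by
  have := Module.finite_of_finite K (M := V)
  have := Fintype.ofFinite V
  have := Fintype.ofFinite (Submodule K V)
  set s : Finset V := {v | v ∈ b ∧ v ∉ a}
  set t : Finset (Submodule K V) := {z | a ⋖ z ∧ z ≤ b}
  have above : ∀ v ∈ s, #(t.bipartiteAbove (· ∈ ·) v) = 1 := by
    intro v hv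
    simp only [s, mem_filter, mem_univ, true_and] at hv
    refine card_eq_one.2 ⟨K ∙ v ⊔ a, Finset.ext fun z => ?_⟩
    simpa only [bipartiteAbove, t, mem_filter, mem_univ, true_and, mem_singleton] using
      Submodule.covBy_and_le_and_mem_iff hab hv.1 hv.2
  have below : ∀ z ∈ t,
      #(s.bipartiteBelow (· ∈ ·) z) = q ^ (finrank K a + 1) - q ^ finrank K a := by
    intro z hz
    simp only [t, mem_filter, mem_univ, true_and] at hz
    have hfib : s.bipartiteBelow (· ∈ ·) z = ({v | v ∈ z ∧ v ∉ a} : Finset V) := by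
      ext v
      simp only [bipartiteBelow, s, mem_filter, mem_univ, true_and]
      exact ⟨fun ⟨⟨_, hva⟩, hvz⟩ => ⟨hvz, hva⟩,
        fun ⟨hvz, hva⟩ => ⟨⟨hz.2 hvz, hva⟩, hvz⟩⟩
    rw [hfib, ← (Submodule.covBy_iff_finrank_eq_add_one.1 hz.1).2,
      ← card_filter_mem_and_notMem_add hz.1.le, Nat.add_sub_cancel]
  have hcount := card_mul_eq_card_mul (· ∈ ·) above below
  have hs := card_filter_mem_and_notMem_add hab
  rw [mul_one, pow_succ, ← Nat.mul_sub_one] at hcount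
  have hpow : q ^ finrank K a * q ^ (finrank K b - finrank K a) = q ^ finrank K b := by
    rw [← pow_add, Nat.add_sub_cancel' (Submodule.finrank_mono hab)]
  rw [Nat.card_eq_fintype_card, Fintype.card_subtype]
  apply Nat.eq_of_mul_eq_mul_left (pow_pos (Fintype.card_pos (α := K)) (finrank K a))
  rw [hpow, ← hs, hcount]
  ring

theorem Submodule.natCard_covBy_right (a : Submodule K V) :
    (q - 1) * Nat.card {z // a ⋖ z} + 1 = q ^ (finrank K V - finrank K a) := by
  simpa only [le_top, and_true, finrank_top] using natCard_covBy_and_le (le_top : a ≤ ⊤)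

theorem Submodule.natCard_covBy_left (x : Submodule K V) :
    (q - 1) * Nat.card {z // z ⋖ x} + 1 = q ^ finrank K x := by
  let e := Subspace.orderIsoFiniteDimensional (K := K) (V := V)
  have hcard : Nat.card {z // z ⋖ x} =
      Nat.card {u : Submodule K (Dual K V) // x.dualAnnihilator ⋖ u} :=
    Nat.card_congr <| (e.toEquiv.trans OrderDual.ofDual).subtypeEquiv fun z =>
      by rw [← apply_covBy_apply_iff e]; exact toDual_covBy_toDual_iff.symm
  rw [hcard, natCard_covBy_right, Subspace.dual_finrank_eq,
    ← Subspace.finrank_add_finrank_dualAnnihilator_eq x, Nat.add_sub_cancel_right]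

end FiniteField

section CoverAdjacency

variable {α : Type*} [PartialOrder α]

open Finset Matrix

noncomputable def coverAdjacency (w : α → ℝ) : Matrix α α ℝ :=
  Matrix.of fun y z => if z ⋖ y then 1 else if y ⋖ z then w y else 0

noncomputable def downIndicator (y : α) : α → ℝ := fun z => if z ≤ y then 1 else 0

theorem coverAdjacency_mulVec_downIndicator_apply [Fintype α] (w : α → ℝ) (x y : α) :
    (coverAdjacency w *ᵥ downIndicator y) x =
      Nat.card {z // z ⋖ x ∧ z ≤ y} + w x * Nat.card {z // x ⋖ z ∧ z ≤ y} := by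
  have hsplit (z : α) : coverAdjacency w x z * downIndicator y z =
      (if z ⋖ x ∧ z ≤ y then 1 else 0) + w x * (if x ⋖ z ∧ z ≤ y then 1 else 0) := by
    simp only [coverAdjacency, downIndicator, of_apply]
    by_cases hzx : z ⋖ x
    · have hxz : ¬ x ⋖ z := fun h => hzx.lt.not_gt h.lt
      simp [hzx, hxz]
    · by_cases hxz : x ⋖ z <;> by_cases hzy : z ≤ y <;> simp [hzx, hxz, hzy]
  simp only [mulVec, dotProduct, hsplit, sum_add_distrib, ← mul_sum, sum_boole,
    Nat.card_eq_fintype_card, Fintype.card_subtype]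

theorem sum_downIndicator_apply (s : Finset α) (x : α) :
    (∑ z ∈ s, downIndicator z) x = #{z ∈ s | x ≤ z} := by
  simp only [Finset.sum_apply, downIndicator, sum_boole]

end CoverAdjacency

open Finset Matrix in
theorem Submodule.coverAdjacency_mulVec_downIndicator {K V : Type*} [Field K] [Fintype K]
    [AddCommGroup V] [Module K V] [FiniteDimensional K V] [Fintype (Submodule K V)]
    (y : Submodule K V) :
    coverAdjacency (fun x : Submodule K V => (Fintype.card K : ℝ) ^ finrank K x) *ᵥ
        downIndicator y =
      (((Fintype.card K : ℝ) ^ finrank K y -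
            (Fintype.card K : ℝ) ^ (finrank K V - finrank K y)) /
          ((Fintype.card K : ℝ) - 1)) • downIndicator y +
        ∑ z ∈ univ.filter (y ⋖ ·), downIndicator z := by
  set q := Fintype.card K
  have hq : (q : ℝ) - 1 ≠ 0 :=
    sub_ne_zero.2 (by exact_mod_cast (Fintype.one_lt_card (α := K)).ne')
  have toReal {n k : ℕ} (h : (q - 1) * n + 1 = q ^ k) :
      ((q : ℝ) - 1) * n + 1 = (q : ℝ) ^ k := by
    rw [← Nat.cast_one (R := ℝ), ← Nat.cast_sub Fintype.card_pos]
    exact_mod_cast h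
  funext x
  rw [coverAdjacency_mulVec_downIndicator_apply, Pi.add_apply, Pi.smul_apply, smul_eq_mul,
    sum_downIndicator_apply, filter_filter, ← Fintype.card_subtype, ← Nat.card_eq_fintype_card]
  by_cases hxy : x ≤ y
  · have hlower : Nat.card {z // z ⋖ x ∧ z ≤ y} = Nat.card {z // z ⋖ x} :=
      Nat.card_congr <| Equiv.subtypeEquivRight fun _ =>
        and_iff_left_of_imp fun h => h.le.trans hxy
    have hupper : Nat.card {z // y ⋖ z ∧ x ≤ z} = Nat.card {z // y ⋖ z} :=
      Nat.card_congr <| Equiv.subtypeEquivRight fun _ =>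
        and_iff_left_of_imp fun h => hxy.trans h.le
    have hpow : (q : ℝ) ^ finrank K x * (q : ℝ) ^ (finrank K y - finrank K x) =
        (q : ℝ) ^ finrank K y := by
      rw [← pow_add, Nat.add_sub_cancel' (finrank_mono hxy)]
    have e₁ := toReal (natCard_covBy_left x)
    have e₂ := toReal (natCard_covBy_and_le hxy)
    have e₃ := toReal (natCard_covBy_right y)
    rw [hlower, hupper, downIndicator, if_pos hxy, mul_one, div_add' _ _ _ hq, eq_div_iff hq]
    linear_combination e₁ + (q : ℝ) ^ finrank K x * e₂ - e₃ + hpow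
  · have hbetween : IsEmpty {z // x ⋖ z ∧ z ≤ y} :=
      ⟨fun ⟨_, hxz, hzy⟩ => hxy (hxz.le.trans hzy)⟩
    rw [Nat.card_of_isEmpty (α := {z // x ⋖ z ∧ z ≤ y}),
      natCard_covBy_inf_eq_natCard_covBy_sup hxy, downIndicator, if_neg hxy]
    simp

theorem stmt_9 (q N : ℕ) (F : Type*) [Field F] [Fintype F] (hF : Fintype.card F = q)
    (V : Type*) [AddCommGroup V] [Module F V] [FiniteDimensional F V]
    (hV : finrank F V = N) [Fintype (Submodule F V)]
    (A : Matrix (Submodule F V) (Submodule F V) ℝ)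
    (hA : ∀ y z : Submodule F V, A y z =
      if z ≤ y ∧ finrank F y = finrank F z + 1 then 1
      else if y ≤ z ∧ finrank F z = finrank F y + 1 then (q : ℝ) ^ finrank F y
      else 0)
    (dd : Submodule F V → (Submodule F V → ℝ))
    (hdd : ∀ y z : Submodule F V, dd y z = if z ≤ y then 1 else 0) :
    ∀ y : Submodule F V, A.mulVec (dd y) =
      (((q : ℝ) ^ finrank F y - (q : ℝ) ^ (N - finrank F y)) / ((q : ℝ) - 1)) • dd y +
      ∑ z ∈ Finset.univ.filter (fun z : Submodule F V => y ≤ z ∧ finrank F z = finrank F y + 1), dd z := by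
  subst hF hV
  have hA' : A = coverAdjacency fun x : Submodule F V => (Fintype.card F : ℝ) ^ finrank F x := by
    ext y z
    simp only [hA, coverAdjacency, Matrix.of_apply, Submodule.covBy_iff_finrank_eq_add_one]
  have hdd' : dd = downIndicator := funext fun y => funext (hdd y)
  intro y
  simpa only [hA', hdd', Submodule.covBy_iff_finrank_eq_add_one] using
    Submodule.coverAdjacency_mulVec_downIndicator y
end

section
/- The weighted adjacency matrix A of L_N(q) is diagonalizable over ℝ. -/
/-! With weights `w y = q ^ (dim y).choose 2` the matrix satisfies detailed balance
`w y * A y z = w z * A z y`, because `(k + 1).choose 2 = k.choose 2 + k`. Conjugating by the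
diagonal matrix `diag (√w)` therefore makes it real symmetric, and the spectral theorem
diagonalizes it. -/

open scoped Classical
open Module

namespace Matrix

variable {n : Type*} [Fintype n] [DecidableEq n]

def IsDiagonalizable {R : Type*} [CommRing R] (A : Matrix n n R) : Prop :=
  ∃ P D : Matrix n n R, IsUnit P ∧ D.IsDiag ∧ A = P * D * P⁻¹

theorem IsDiagonalizable.conj {R : Type*} [CommRing R] {S B : Matrix n n R} (hS : IsUnit S)
    (hB : B.IsDiagonalizable) : (S * B * S⁻¹).IsDiagonalizable := by
  obtain ⟨P, D, hP, hD, rfl⟩ := hB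
  refine ⟨S * P, D, hS.mul hP, hD, ?_⟩
  simp only [mul_inv_rev, mul_assoc]

theorem IsHermitian.isDiagonalizable {𝕜 : Type*} [RCLike 𝕜] {A : Matrix n n 𝕜}
    (hA : A.IsHermitian) : A.IsDiagonalizable := by
  set U : Matrix n n 𝕜 := (hA.eigenvectorUnitary : Matrix n n 𝕜)
  have hU : U * star U = 1 := Unitary.coe_mul_star_self _
  refine ⟨U, diagonal (RCLike.ofReal ∘ hA.eigenvalues),
    ⟨⟨U, star U, hU, Unitary.coe_star_mul_self _⟩, rfl⟩, isDiag_diagonal _, ?_⟩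
  rw [inv_eq_right_inv hU]
  exact hA.spectral_theorem

theorem isSymm_diagonal_mul_mul_diagonal_inv {K : Type*} [Field K] {A : Matrix n n K}
    {d : n → K} (hd : ∀ i, d i ≠ 0) (h : ∀ i j, d i ^ 2 * A i j = d j ^ 2 * A j i) :
    (diagonal d * A * diagonal d⁻¹).IsSymm := by
  refine IsSymm.ext fun i j => ?_
  simp only [diagonal_mul, mul_diagonal, Pi.inv_apply]
  field_simp [hd i, hd j]
  linear_combination h j i

theorem isDiagonalizable_of_detailed_balance {A : Matrix n n ℝ} {w : n → ℝ}
    (hw : ∀ i, 0 < w i) (h : ∀ i j, w i * A i j = w j * A j i) : A.IsDiagonalizable := by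
  set d : n → ℝ := fun i => √(w i)
  have hd : ∀ i, d i ≠ 0 := fun i => (Real.sqrt_pos.2 (hw i)).ne'
  have hd_sq : ∀ i, d i ^ 2 = w i := fun i => Real.sq_sqrt (hw i).le
  have hsymm := isSymm_diagonal_mul_mul_diagonal_inv (A := A) hd (by simpa only [hd_sq] using h)
  have hinv : diagonal d⁻¹ * diagonal d = 1 := by
    rw [diagonal_mul_diagonal, ← diagonal_one]
    exact congrArg diagonal (funext fun i => inv_mul_cancel₀ (hd i))
  have hconj :
      A = diagonal d⁻¹ * (diagonal d * A * diagonal d⁻¹) * (diagonal d⁻¹)⁻¹ := by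
    rw [inv_eq_right_inv hinv]
    simp only [← mul_assoc, hinv, one_mul, mul_assoc A, mul_one]
  rw [hconj]
  exact (isHermitian_iff_isSymm.2 hsymm).isDiagonalizable.conj
    (isUnit_diagonal.2 (Pi.isUnit_iff.2 fun i => (inv_ne_zero (hd i)).isUnit))

end Matrix

noncomputable def gradedUpDownMatrix {α R : Type*} [LE α] [Semiring R] (r : α → ℕ) (q : R) :
    Matrix α α R :=
  fun y z =>
    if z ≤ y ∧ r y = r z + 1 then 1
    else if y ≤ z ∧ r z = r y + 1 then q ^ r y
    else 0

theorem pow_choose_two_mul_gradedUpDownMatrix {α R : Type*} [LE α] [CommSemiring R]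
    (r : α → ℕ) (q : R) (y z : α) :
    q ^ (r y).choose 2 * gradedUpDownMatrix r q y z =
      q ^ (r z).choose 2 * gradedUpDownMatrix r q z y := by
  have choose_succ (k : ℕ) : (k + 1).choose 2 = k.choose 2 + k := by
    rw [Nat.choose_succ_succ, Nat.choose_one_right, add_comm]
  unfold gradedUpDownMatrix
  split_ifs with h₁ h₂ h₃ <;> first | omega | skip
  · rw [h₁.2, choose_succ, pow_add, mul_one]
  · rw [h₃.2, choose_succ, pow_add, mul_one]
  · rw [mul_zero, mul_zero]

theorem stmt_10_general (q : ℕ) (F : Type*) [Field F] [Fintype F] (hF : Fintype.card F = q)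
    (V : Type*) [AddCommGroup V] [Module F V] [Fintype (Submodule F V)]
    (A : Matrix (Submodule F V) (Submodule F V) ℝ)
    (hA : ∀ y z : Submodule F V, A y z =
      if z ≤ y ∧ finrank F y = finrank F z + 1 then 1
      else if y ≤ z ∧ finrank F z = finrank F y + 1 then (q : ℝ) ^ finrank F y
      else 0) :
    ∃ P D : Matrix (Submodule F V) (Submodule F V) ℝ,
      IsUnit P ∧ D.IsDiag ∧ A = P * D * P⁻¹ := by
  have hq : (0 : ℝ) < q := by
    rw [← hF]
    exact_mod_cast Fintype.card_pos
  obtain rfl : A = gradedUpDownMatrix (fun y : Submodule F V => finrank F y) (q : ℝ) :=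
    Matrix.ext hA
  exact Matrix.isDiagonalizable_of_detailed_balance (fun _ => pow_pos hq _)
    (pow_choose_two_mul_gradedUpDownMatrix _ _)

theorem stmt_10 (q N : ℕ) (F : Type*) [Field F] [Fintype F] (hF : Fintype.card F = q)
    (V : Type*) [AddCommGroup V] [Module F V] [FiniteDimensional F V]
    (hV : finrank F V = N) [Fintype (Submodule F V)]
    (A : Matrix (Submodule F V) (Submodule F V) ℝ)
    (hA : ∀ y z : Submodule F V, A y z =
      if z ≤ y ∧ finrank F y = finrank F z + 1 then 1
      else if y ≤ z ∧ finrank F z = finrank F y + 1 then (q : ℝ) ^ finrank F y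
      else 0) :
    ∃ P D : Matrix (Submodule F V) (Submodule F V) ℝ,
      IsUnit P ∧ D.IsDiag ∧ A = P * D * P⁻¹ :=
  stmt_10_general q F hF V A hA
end

section
/- The weighted adjacency matrix A of L_N(q) satisfies A y^{↑↓} = θ_{dim y} y^{↑↓} + Σ_{y covers z} z^{↑↓}, where θ_i = (q^{N-i} - q^i)/(q-1) and y^{↑↓} = q^{binom(N - dim y, 2)} Σ_{y ≤ z} q^{(N - dim z) dim y} ẑ. -/
open scoped Classical
open Module

section Aux

variable {F : Type*} [Field F] [Fintype F]

lemma aux_lines (q : ℕ) (hF : Fintype.card F = q)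
    (W : Type*) [AddCommGroup W] [Module F W] [FiniteDimensional F W] :
    (q - 1) * Nat.card {z : Submodule F W // finrank F z = 1} = q ^ finrank F W - 1 := by
  have hfinW : Finite W := Module.finite_of_finite F
  have : Fintype W := Fintype.ofFinite W
  have : Finite (Submodule F W) := Finite.of_injective _ SetLike.coe_injective
  have : Fintype (Submodule F W) := Fintype.ofFinite _
  set L : Finset (Submodule F W) := Finset.univ.filter (fun z => finrank F z = 1) with hL
  have hcard : Nat.card {z : Submodule F W // finrank F z = 1} = L.card := by
    rw [Nat.card_eq_fintype_card, Fintype.card_subtype]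
  set S : Finset W := Finset.univ.filter (fun v => v ≠ 0) with hS
  have h1 : Fintype.card W = q ^ finrank F W := by rw [card_eq_pow_finrank (K := F), hF]
  have hSc : S.card = q ^ finrank F W - 1 := by
    have h2 : S = Finset.univ.erase 0 := by
      rw [hS, Finset.filter_ne']
    rw [h2, Finset.card_erase_of_mem (Finset.mem_univ _), Finset.card_univ, h1]
  have hmaps : ∀ v ∈ S, Submodule.span F {v} ∈ L := by
    intro v hv
    simp only [hS, Finset.mem_filter, Finset.mem_univ, true_and] at hv
    simp [hL, finrank_span_singleton hv]
  have hfib : ∀ z ∈ L, (S.filter (fun v => Submodule.span F {v} = z)).card = q - 1 := by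
    intro z hz
    simp only [hL, Finset.mem_filter, Finset.mem_univ, true_and] at hz
    have hzq : Fintype.card z = q := by
      rw [card_eq_pow_finrank (K := F), hF, hz, pow_one]
    have hset : S.filter (fun v => Submodule.span F {v} = z)
        = Finset.univ.filter (fun v => v ∈ z ∧ v ≠ 0) := by
      ext v
      simp only [hS, Finset.filter_filter, Finset.mem_filter, Finset.mem_univ, true_and]
      constructor
      · rintro ⟨hv0, hsp⟩
        exact ⟨hsp ▸ Submodule.mem_span_singleton_self v, hv0⟩
      · rintro ⟨hvz, hv0⟩
        refine ⟨hv0, Submodule.eq_of_le_of_finrank_eq ?_ ?_⟩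
        · rwa [Submodule.span_singleton_le_iff_mem]
        · rw [finrank_span_singleton hv0, hz]
    rw [hset]
    have h3 : (Finset.univ.filter (fun v : W => v ∈ z ∧ v ≠ 0)).card
        = Fintype.card {v : W // v ∈ z ∧ v ≠ 0} := (Fintype.card_subtype _).symm
    have e : {v : W // v ∈ z ∧ v ≠ 0} ≃ {u : z // ¬ (u = 0)} :=
      { toFun := fun v => ⟨⟨v.1, v.2.1⟩, by simpa using v.2.2⟩
        invFun := fun u => ⟨u.1.1, u.1.2, by simpa using u.2⟩
        left_inv := fun v => rfl
        right_inv := fun u => rfl }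
    rw [h3, Fintype.card_congr e, Fintype.card_subtype_compl, hzq, Fintype.card_subtype_eq]
  have hkey := Finset.card_eq_sum_card_fiberwise hmaps
  rw [Finset.sum_congr rfl hfib, Finset.sum_const, smul_eq_mul] at hkey
  rw [hcard, Nat.mul_comm, ← hkey, hSc]

lemma aux_hyperplanes (q : ℕ) (hF : Fintype.card F = q)
    (W : Type*) [AddCommGroup W] [Module F W] [FiniteDimensional F W] :
    (q - 1) * Nat.card {z : Submodule F W // finrank F z + 1 = finrank F W}
      = q ^ finrank F W - 1 := by
  have e : {z : Submodule F W // finrank F z + 1 = finrank F W}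
      ≃ {Φ : Submodule F (Dual F W) // finrank F Φ = 1} :=
    { toFun := fun z => ⟨z.1.dualAnnihilator, by
        have h1 : finrank F (W ⧸ z.1) = finrank F z.1.dualAnnihilator :=
          LinearEquiv.finrank_eq (Subspace.quotEquivAnnihilator z.1)
        have h2 := Submodule.finrank_quotient_add_finrank z.1
        have h3 := z.2
        omega⟩
      invFun := fun Φ => ⟨Φ.1.dualCoannihilator, by
        have h1 := Subspace.finrank_add_finrank_dualCoannihilator_eq Φ.1
        have h2 := Φ.2
        omega⟩
      left_inv := fun z => Subtype.ext Subspace.dualAnnihilator_dualCoannihilator_eq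
      right_inv := fun Φ => Subtype.ext Subspace.dualCoannihilator_dualAnnihilator_eq }
  rw [Nat.card_congr e, aux_lines q hF (Dual F W), Subspace.dual_finrank_eq]

omit [Fintype F] in
lemma aux_rank_map_mkQ {V : Type*} [AddCommGroup V] [Module F V] [FiniteDimensional F V]
    {p z : Submodule F V} (h : p ≤ z) :
    finrank F z = finrank F (z.map p.mkQ) + finrank F p := by
  have h1 := LinearMap.finrank_range_add_finrank_ker (p.mkQ.comp z.subtype)
  rw [LinearMap.range_comp, Submodule.range_subtype, LinearMap.ker_comp, Submodule.ker_mkQ] at h1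
  have h2 := (Submodule.comapSubtypeEquivOfLe h).finrank_eq
  omega

lemma aux_quot_card {V : Type*} [AddCommGroup V] [Module F V] [FiniteDimensional F V]
    (p c : Submodule F V) (hpc : p ≤ c) (P : ℕ → Prop) :
    Nat.card {z : Submodule F V // p ≤ z ∧ z ≤ c ∧ P (finrank F z)}
      = Nat.card {w : Submodule F (V ⧸ p) // w ≤ c.map p.mkQ ∧ P (finrank F w + finrank F p)} := by
  have hker : ∀ w : Submodule F (V ⧸ p), p ≤ w.comap p.mkQ := by
    intro w u hu
    simp only [Submodule.mem_comap]
    have : p.mkQ u = 0 := by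
      rw [← LinearMap.mem_ker, Submodule.ker_mkQ]; exact hu
    rw [this]; exact w.zero_mem
  have hmc : ∀ w : Submodule F (V ⧸ p), (w.comap p.mkQ).map p.mkQ = w := by
    intro w
    exact Submodule.map_comap_eq_self (by rw [Submodule.range_mkQ]; exact le_top)
  refine Nat.card_congr ⟨fun z => ⟨z.1.map p.mkQ, Submodule.map_mono z.2.2.1, ?_⟩,
    fun w => ⟨w.1.comap p.mkQ, hker w.1, ?_, ?_⟩, fun z => Subtype.ext ?_, fun w => Subtype.ext ?_⟩
  · rw [← aux_rank_map_mkQ z.2.1]; exact z.2.2.2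
  · calc w.1.comap p.mkQ ≤ (c.map p.mkQ).comap p.mkQ := Submodule.comap_mono w.2.1
      _ = c ⊔ p := by rw [Submodule.comap_map_eq, Submodule.ker_mkQ]
      _ = c := sup_eq_left.mpr hpc
  · have := aux_rank_map_mkQ (hker w.1)
    rw [hmc w.1] at this
    rw [this]; exact w.2.2
  · show Submodule.comap p.mkQ (Submodule.map p.mkQ z.1) = z.1
    rw [Submodule.comap_map_eq, Submodule.ker_mkQ, sup_eq_left.mpr z.2.1]
  · show Submodule.map p.mkQ (Submodule.comap p.mkQ w.1) = w.1
    exact hmc w.1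

lemma aux_sub_card {V : Type*} [AddCommGroup V] [Module F V] [FiniteDimensional F V]
    (p : Submodule F V) (P : ℕ → Prop) :
    Nat.card {z : Submodule F V // z ≤ p ∧ P (finrank F z)}
      = Nat.card {w : Submodule F p // P (finrank F w)} := by
  refine Nat.card_congr ⟨fun z => ⟨z.1.comap p.subtype, ?_⟩,
    fun w => ⟨w.1.map p.subtype, Submodule.map_subtype_le p w.1, ?_⟩,
    fun z => Subtype.ext ?_, fun w => Subtype.ext ?_⟩
  · rw [(Submodule.comapSubtypeEquivOfLe z.2.1).finrank_eq]; exact z.2.2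
  · rw [Submodule.finrank_map_subtype_eq]; exact w.2
  · show Submodule.map p.subtype (Submodule.comap p.subtype z.1) = z.1
    rw [Submodule.map_comap_subtype, inf_eq_right.mpr z.2.1]
  · show Submodule.comap p.subtype (Submodule.map p.subtype w.1) = w.1
    rw [Submodule.comap_map_eq, Submodule.ker_subtype, sup_bot_eq]

lemma aux_below (q : ℕ) (hF : Fintype.card F = q)
    {V : Type*} [AddCommGroup V] [Module F V] [FiniteDimensional F V] (p : Submodule F V) :
    (q - 1) * Nat.card {z : Submodule F V // z ≤ p ∧ finrank F z + 1 = finrank F p}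
      = q ^ finrank F p - 1 := by
  rw [aux_sub_card p (fun t => t + 1 = finrank F p)]
  exact aux_hyperplanes q hF p

lemma aux_above (q : ℕ) (hF : Fintype.card F = q)
    {V : Type*} [AddCommGroup V] [Module F V] [FiniteDimensional F V] (p : Submodule F V) :
    (q - 1) * Nat.card {z : Submodule F V // p ≤ z ∧ finrank F z = finrank F p + 1}
      = q ^ (finrank F V - finrank F p) - 1 := by
  have e1 : Nat.card {z : Submodule F V // p ≤ z ∧ finrank F z = finrank F p + 1}
      = Nat.card {z : Submodule F V // p ≤ z ∧ z ≤ ⊤ ∧ finrank F z = finrank F p + 1} :=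
    Nat.card_congr (Equiv.subtypeEquivRight (fun z => by simp))
  rw [e1, aux_quot_card p ⊤ le_top (fun t => t = finrank F p + 1)]
  have e2 : Nat.card {w : Submodule F (V ⧸ p) //
        w ≤ Submodule.map p.mkQ ⊤ ∧ finrank F w + finrank F p = finrank F p + 1}
      = Nat.card {w : Submodule F (V ⧸ p) // finrank F w = 1} := by
    refine Nat.card_congr (Equiv.subtypeEquivRight (fun w => ?_))
    constructor
    · rintro ⟨-, h⟩; omega
    · intro h
      refine ⟨?_, by omega⟩
      rw [Submodule.map_top, Submodule.range_mkQ]; exact le_top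
  rw [e2, aux_lines q hF (V ⧸ p)]
  have h3 := Submodule.finrank_quotient_add_finrank p
  have : finrank F (V ⧸ p) = finrank F V - finrank F p := by omega
  rw [this]

lemma aux_between (q : ℕ) (hF : Fintype.card F = q)
    {V : Type*} [AddCommGroup V] [Module F V] [FiniteDimensional F V]
    {y x : Submodule F V} (hyx : y ≤ x) :
    (q - 1) * Nat.card {z : Submodule F V // y ≤ z ∧ z ≤ x ∧ finrank F x = finrank F z + 1}
      = q ^ (finrank F x - finrank F y) - 1 := by
  rw [aux_quot_card y x hyx (fun t => finrank F x = t + 1)]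
  have hr := aux_rank_map_mkQ hyx
  have e2 : Nat.card {w : Submodule F (V ⧸ y) //
        w ≤ Submodule.map y.mkQ x ∧ finrank F x = (finrank F w + finrank F y) + 1}
      = Nat.card {w : Submodule F (V ⧸ y) //
        w ≤ Submodule.map y.mkQ x ∧ finrank F w + 1 = finrank F (Submodule.map y.mkQ x)} :=
    Nat.card_congr (Equiv.subtypeEquivRight (fun w => by constructor <;> (intro h; exact ⟨h.1, by omega⟩)))
  rw [e2, aux_below q hF (Submodule.map y.mkQ x)]
  have : finrank F (Submodule.map y.mkQ x) = finrank F x - finrank F y := by omega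
  rw [this]

end Aux

lemma aux_id2 (Q : ℝ) (b k a' c m : ℕ) (hm : m + a' = b + k) :
    Q ^ b * (Q ^ c * Q ^ (k * (a' + 1))) = Q ^ (c + m) * Q ^ ((k + 1) * a') := by
  rw [Nat.mul_succ, Nat.succ_mul, ← pow_add, ← pow_add, ← pow_add]
  congr 1
  omega

lemma aux_id1 (Q : ℝ) (hQ : 1 < Q) (a s k c : ℕ) :
    (Q^s - 1)/(Q-1) * (Q^c * Q^((k+1)*a)) + (Q^k - 1)/(Q-1) * (Q^(a+s) * (Q^c * Q^((k-1)*a)))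
      = (Q^(s+k) - Q^a)/(Q-1) * (Q^c * Q^(k*a)) + (Q^a - 1)/(Q-1) * (Q^(c+(s+k)) * Q^(k*(a-1))) := by
  have hQne : Q - 1 ≠ 0 := by linarith
  rcases k with _ | k <;> rcases a with _ | a <;>
    simp only [Nat.succ_sub_one, Nat.zero_sub, Nat.mul_zero, Nat.zero_mul, pow_zero, Nat.add_zero, Nat.zero_add] <;>
    field_simp <;> ring

theorem stmt_12 (q N : ℕ) (F : Type*) [Field F] [Fintype F] (hF : Fintype.card F = q)
    (V : Type*) [AddCommGroup V] [Module F V] [FiniteDimensional F V]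
    (hV : finrank F V = N) [Fintype (Submodule F V)]
    (A : Matrix (Submodule F V) (Submodule F V) ℝ)
    (hA : ∀ y z : Submodule F V, A y z =
      if z ≤ y ∧ finrank F y = finrank F z + 1 then 1
      else if y ≤ z ∧ finrank F z = finrank F y + 1 then (q : ℝ) ^ finrank F y
      else 0)
    (ud : Submodule F V → (Submodule F V → ℝ))
    (hud : ∀ y z : Submodule F V, ud y z =
      if y ≤ z then (q : ℝ) ^ ((N - finrank F y).choose 2) * (q : ℝ) ^ ((N - finrank F z) * finrank F y)
      else 0) :
    ∀ y : Submodule F V, A.mulVec (ud y) =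
      (((q : ℝ) ^ (N - finrank F y) - (q : ℝ) ^ finrank F y) / ((q : ℝ) - 1)) • ud y +
      ∑ z ∈ Finset.univ.filter (fun z : Submodule F V => z ≤ y ∧ finrank F y = finrank F z + 1), ud z := by
  intro y
  funext x
  have hq2 : 2 ≤ q := hF ▸ Fintype.one_lt_card
  obtain ⟨q', rfl⟩ : ∃ q', q = q' + 2 := ⟨q - 2, by omega⟩
  set q : ℕ := q' + 2 with hqdef
  set Q : ℝ := (q : ℝ) with hQdef
  have hQ1 : (1:ℝ) < Q := by
    rw [hQdef, hqdef]; exact_mod_cast hq2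
  have hQne : Q - 1 ≠ 0 := by linarith
  have haN : finrank F y ≤ N := hV ▸ Submodule.finrank_le y
  have hbN : finrank F x ≤ N := hV ▸ Submodule.finrank_le x
  -- names
  set a : ℕ := finrank F y with ha
  set b : ℕ := finrank F x with hb
  set c : ℕ := (N - a).choose 2 with hc
  -- RHS shape
  rw [Pi.add_apply, Pi.smul_apply, Finset.sum_apply, smul_eq_mul]
  -- LHS expansion
  have hsplit : ∀ z : Submodule F V, A x z * ud y z =
      (if y ≤ z ∧ z ≤ x ∧ b = finrank F z + 1 then Q ^ c * Q ^ ((N - finrank F z) * a) else 0)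
    + (if x ≤ z ∧ finrank F z = b + 1 ∧ y ≤ z then Q ^ b * (Q ^ c * Q ^ ((N - finrank F z) * a)) else 0) := by
    intro z
    rw [hA, hud]
    by_cases h3 : y ≤ z
    · by_cases h1 : z ≤ x ∧ b = finrank F z + 1
      · have h2 : ¬(x ≤ z ∧ finrank F z = b + 1) := by
          rintro ⟨-, h⟩; have := h1.2; omega
        rw [if_pos h1, if_pos h3, if_pos ⟨h3, h1.1, h1.2⟩,
            if_neg (fun h => h2 ⟨h.1, h.2.1⟩), one_mul, add_zero]
      · by_cases h2 : x ≤ z ∧ finrank F z = b + 1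
        · rw [if_neg h1, if_pos h2, if_pos h3,
              if_neg (fun h => h1 ⟨h.2.1, h.2.2⟩), if_pos ⟨h2.1, h2.2, h3⟩, zero_add]
        · rw [if_neg h1, if_neg h2, if_pos h3, zero_mul,
              if_neg (fun h => h1 ⟨h.2.1, h.2.2⟩), if_neg (fun h => h2 ⟨h.1, h.2.1⟩), add_zero]
    · rw [if_neg h3, mul_zero, if_neg (fun h => h3 h.1), if_neg (fun h => h3 h.2.2), add_zero]
  have hLHS : A.mulVec (ud y) x = ∑ z : Submodule F V, A x z * ud y z := rfl
  rw [hLHS, Finset.sum_congr rfl (fun z _ => hsplit z), Finset.sum_add_distrib,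
      ← Finset.sum_filter, ← Finset.sum_filter]
  set T1 := Finset.filter (fun z : Submodule F V => y ≤ z ∧ z ≤ x ∧ b = finrank F z + 1) Finset.univ with hT1
  set T2 := Finset.filter (fun z : Submodule F V => x ≤ z ∧ finrank F z = b + 1 ∧ y ≤ z) Finset.univ with hT2
  set T3 := Finset.filter (fun z : Submodule F V => z ≤ y ∧ a = finrank F z + 1) Finset.univ with hT3
  have hzN : ∀ z : Submodule F V, finrank F z ≤ N := fun z => hV ▸ Submodule.finrank_le z
  have hsum1 : ∑ z ∈ T1, Q ^ c * Q ^ ((N - finrank F z) * a)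
      = T1.card * (Q ^ c * Q ^ ((N - b + 1) * a)) := by
    have h5 : ∀ z ∈ T1, Q ^ c * Q ^ ((N - finrank F z) * a) = Q ^ c * Q ^ ((N - b + 1) * a) := by
      intro z hz
      rw [hT1, Finset.mem_filter] at hz
      have h6 := hz.2.2.2
      have h7 := hzN z
      have h8 : N - finrank F z = N - b + 1 := by omega
      rw [h8]
    rw [Finset.sum_congr rfl h5, Finset.sum_const, nsmul_eq_mul]
  have hsum2 : ∑ z ∈ T2, Q ^ b * (Q ^ c * Q ^ ((N - finrank F z) * a))
      = T2.card * (Q ^ b * (Q ^ c * Q ^ ((N - (b + 1)) * a))) := by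
    have h5 : ∀ z ∈ T2, Q ^ b * (Q ^ c * Q ^ ((N - finrank F z) * a))
        = Q ^ b * (Q ^ c * Q ^ ((N - (b + 1)) * a)) := by
      intro z hz
      rw [hT2, Finset.mem_filter] at hz
      have h6 := hz.2.2.1
      have h8 : N - finrank F z = N - (b + 1) := by omega
      rw [h8]
    rw [Finset.sum_congr rfl h5, Finset.sum_const, nsmul_eq_mul]
  have hsum3 : ∑ z ∈ T3, ud z x
      = ((T3.filter (fun z => z ≤ x)).card : ℝ)
        * (Q ^ ((N - a + 1).choose 2) * Q ^ ((N - b) * (a - 1))) := by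
    have h5 : ∀ z ∈ T3, ud z x
        = if z ≤ x then Q ^ ((N - a + 1).choose 2) * Q ^ ((N - b) * (a - 1)) else 0 := by
      intro z hz
      rw [hT3, Finset.mem_filter] at hz
      have h6 := hz.2.2
      have h7 := hzN z
      rw [hud]
      have e1 : N - finrank F z = N - a + 1 := by omega
      have e2 : finrank F z = a - 1 := by omega
      rw [e1, e2]
    rw [Finset.sum_congr rfl h5, ← Finset.sum_filter, Finset.sum_const, nsmul_eq_mul]
  rw [hsum1, hsum2, hsum3]
  have hnat : ∀ (p : Submodule F V → Prop) [DecidablePred p],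
      (Finset.univ.filter p).card = Nat.card {z : Submodule F V // p z} := fun p _ =>
    (Fintype.card_subtype p).symm.trans Nat.card_eq_fintype_card.symm
  have hchoose : (N - a + 1).choose 2 = c + (N - a) := by
    have h1 : (N - a + 1).choose 2 = (N - a).choose 1 + (N - a).choose 2 :=
      Nat.choose_succ_succ (N - a) 1
    have h2 : (N - a).choose 1 = N - a := Nat.choose_one_right (N - a)
    omega
  by_cases hxy : y ≤ x
  · -- case y ≤ x
    rw [hud, if_pos hxy]
    rw [← ha, ← hb, ← hc]
    have hab : a ≤ b := Submodule.finrank_mono hxy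
    obtain ⟨s, hs⟩ : ∃ s, b = a + s := ⟨b - a, by omega⟩
    obtain ⟨k, hk⟩ : ∃ k, N = b + k := ⟨N - b, by omega⟩
    -- counting results
    have e1 := aux_between (F := F) q hF hxy
    rw [← hb, ← ha] at e1
    have e2 := aux_above (F := F) q hF x
    rw [hV, ← hb] at e2
    have e3 := aux_below (F := F) q hF y
    rw [← ha] at e3
    have hc1 : (q - 1) * T1.card = q ^ s - 1 := by
      rw [hT1, hnat]
      have hbs : b - a = s := by omega
      rw [← hbs]
      exact e1
    have hc2 : (q - 1) * T2.card = q ^ k - 1 := by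
      rw [hT2, hnat]
      have heq : Nat.card {z : Submodule F V // x ≤ z ∧ finrank F z = b + 1 ∧ y ≤ z}
          = Nat.card {z : Submodule F V // x ≤ z ∧ finrank F z = b + 1} :=
        Nat.card_congr (Equiv.subtypeEquivRight (fun z =>
          ⟨fun h => ⟨h.1, h.2.1⟩, fun h => ⟨h.1, h.2, hxy.trans h.1⟩⟩))
      rw [heq]
      have hbs : N - b = k := by omega
      rw [← hbs]
      exact e2
    have hc3 : (q - 1) * (T3.filter (fun z => z ≤ x)).card = q ^ a - 1 := by
      rw [hT3, Finset.filter_filter, hnat]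
      have heq : Nat.card {z : Submodule F V // (z ≤ y ∧ a = finrank F z + 1) ∧ z ≤ x}
          = Nat.card {z : Submodule F V // z ≤ y ∧ finrank F z + 1 = a} :=
        Nat.card_congr (Equiv.subtypeEquivRight (fun z =>
          ⟨fun h => ⟨h.1.1, h.1.2.symm⟩, fun h => ⟨⟨h.1, h.2.symm⟩, h.1.trans hxy⟩⟩))
      rw [heq]
      exact e3
    -- real versions
    have hcast : ∀ (n : ℕ) (t : ℕ), (q - 1) * n = q ^ t - 1 → (n : ℝ) = (Q ^ t - 1) / (Q - 1) := by
      intro n t h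
      rw [eq_div_iff hQne]
      have hle : 1 ≤ q ^ t := Nat.one_le_pow _ _ (by omega)
      have h9 := congrArg (Nat.cast (R := ℝ)) h
      rw [Nat.cast_mul, Nat.cast_sub (by omega : 1 ≤ q), Nat.cast_sub hle,
          Nat.cast_pow, Nat.cast_one] at h9
      rw [mul_comm] at h9
      exact h9
    rw [hcast _ _ hc1, hcast _ _ hc2, hcast _ _ hc3]
    rw [hchoose, show N - a = s + k by omega, show N - b + 1 = k + 1 by omega,
        show N - (b + 1) = k - 1 by omega, show N - b = k by omega,
        show b = a + s by omega]
    exact aux_id1 Q hQ1 a s k c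
  · -- case ¬ y ≤ x
    rw [hud, if_neg hxy, mul_zero, zero_add]
    have hT1e : T1 = ∅ := by
      rw [hT1, Finset.filter_eq_empty_iff]
      rintro z - ⟨h1, h2, -⟩
      exact hxy (h1.trans h2)
    rw [hT1e, Finset.card_empty, Nat.cast_zero, zero_mul, zero_add]
    have hsupx : x < x ⊔ y :=
      lt_of_le_of_ne le_sup_left (fun h => hxy (le_sup_right.trans_eq h.symm))
    have hsup : b + 1 ≤ finrank F ↥(x ⊔ y) := Submodule.finrank_lt_finrank_of_lt hsupx
    have hmod : finrank F ↥(x ⊔ y) + finrank F ↥(x ⊓ y) = b + a :=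
      Submodule.finrank_sup_add_finrank_inf_eq x y
    have hinfy : finrank F ↥(x ⊓ y) ≤ a := Submodule.finrank_mono inf_le_right
    have hsupN : finrank F ↥(x ⊔ y) ≤ N := hzN _
    by_cases hd : finrank F ↥(x ⊔ y) = b + 1
    · have hT2s : T2 = {x ⊔ y} := by
        rw [hT2]
        ext z
        simp only [Finset.mem_filter, Finset.mem_univ, true_and, Finset.mem_singleton]
        constructor
        · rintro ⟨h1, h2, h3⟩
          exact (Submodule.eq_of_le_of_finrank_eq (sup_le h1 h3) (by omega)).symm
        · rintro rfl
          exact ⟨le_sup_left, hd, le_sup_right⟩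
      have hda : a = finrank F ↥(x ⊓ y) + 1 := by omega
      have hT3s : T3.filter (fun z => z ≤ x) = {x ⊓ y} := by
        rw [hT3, Finset.filter_filter]
        ext z
        simp only [Finset.mem_filter, Finset.mem_univ, true_and, Finset.mem_singleton]
        constructor
        · rintro ⟨⟨h1, h2⟩, h4⟩
          exact Submodule.eq_of_le_of_finrank_eq (le_inf h4 h1) (by omega)
        · rintro rfl
          exact ⟨⟨inf_le_right, hda⟩, inf_le_left⟩
      rw [hT2s, hT3s]
      simp only [Finset.card_singleton, Nat.cast_one, one_mul]
      obtain ⟨k, hk⟩ : ∃ k, N = b + 1 + k := ⟨N - (b + 1), by omega⟩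
      obtain ⟨a', ha'⟩ : ∃ a', a = a' + 1 := ⟨a - 1, by omega⟩
      rw [hchoose, show N - (b + 1) = k by omega, show N - b = k + 1 by omega,
          show a - 1 = a' by omega, show a = a' + 1 by omega]
      exact aux_id2 Q b k a' c (N - (a' + 1)) (by omega)
    · have hT2e : T2 = ∅ := by
        rw [hT2, Finset.filter_eq_empty_iff]
        rintro z - ⟨h1, h2, h3⟩
        have h4 : finrank F ↥(x ⊔ y) ≤ finrank F z := Submodule.finrank_mono (sup_le h1 h3)
        omega
      have hT3e : T3.filter (fun z => z ≤ x) = ∅ := by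
        rw [hT3, Finset.filter_filter, Finset.filter_eq_empty_iff]
        rintro z - ⟨⟨h1, h2⟩, h4⟩
        have h5 : finrank F z ≤ finrank F ↥(x ⊓ y) := Submodule.finrank_mono (le_inf h4 h1)
        omega
      rw [hT2e, hT3e]
      simp
end

section
/- Let A* be the diagonal matrix with (y,y)-entry q^{-dim y}. Then A* y^{↓↓} = q^{-dim y} y^{↓↓} + (q-1) q^{-dim y} Σ_{y covers z} z^{↓↓} for every subspace y. -/
open scoped Classical
open Module

section aux
variable {F : Type*} [Field F] [Fintype F]
variable {W : Type*} [AddCommGroup W] [Module F W] [FiniteDimensional F W]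

lemma card_mod (W : Type*) [AddCommGroup W] [Module F W] [FiniteDimensional F W] :
    Nat.card W = Fintype.card F ^ finrank F W := by
  have : Finite W := Module.finite_of_finite F
  cases nonempty_fintype W
  rw [Nat.card_eq_fintype_card, card_eq_pow_finrank (K := F)]

lemma card_dual (W : Type*) [AddCommGroup W] [Module F W] [FiniteDimensional F W] :
    Nat.card (W →ₗ[F] F) = Fintype.card F ^ finrank F W := by
  have := card_mod (F := F) (Module.Dual F W)
  rwa [Subspace.dual_finrank_eq] at this

lemma fiber_card [Fintype (W →ₗ[F] F)] (H : Submodule F W)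
    (hH : finrank F W = finrank F H + 1) :
    (Finset.univ.filter (fun f : W →ₗ[F] F => f ≠ 0 ∧ LinearMap.ker f = H)).card
      = Fintype.card F - 1 := by
  have hQ : finrank F (W ⧸ H) = 1 := by
    have := Submodule.finrank_quotient_add_finrank H; omega
  have hHtop : H ≠ ⊤ := by
    intro h; rw [h, finrank_top] at hH; omega
  have : Finite (W ⧸ H →ₗ[F] F) := by
    have : Finite (Module.Dual F (W ⧸ H)) := Module.finite_of_finite F
    exact this
  cases nonempty_fintype (W ⧸ H →ₗ[F] F)
  have hinj : Function.Injective (fun g : (W ⧸ H) →ₗ[F] F => g.comp H.mkQ) := by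
    intro a b h
    exact (LinearMap.cancel_right (Submodule.mkQ_surjective H)).mp h
  have himg : Finset.univ.filter (fun f : W →ₗ[F] F => f ≠ 0 ∧ LinearMap.ker f = H)
      = (Finset.univ.filter (fun g : (W ⧸ H) →ₗ[F] F => g ≠ 0)).image
          (fun g => g.comp H.mkQ) := by
    ext f
    simp only [Finset.mem_filter, Finset.mem_univ, true_and, Finset.mem_image]
    constructor
    · rintro ⟨hf0, hker⟩
      refine ⟨H.liftQ f (le_of_eq hker.symm), ?_, Submodule.liftQ_mkQ _ _ _⟩
      intro h0
      apply hf0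
      rw [← Submodule.liftQ_mkQ H f (le_of_eq hker.symm), h0, LinearMap.zero_comp]
    · rintro ⟨g, hg0, rfl⟩
      have hkg : LinearMap.ker g = ⊥ := by
        by_contra hk
        have h1 : finrank F (LinearMap.ker g) ≠ 0 := by
          rwa [Ne, Submodule.finrank_eq_zero]
        have h2 : finrank F (LinearMap.ker g) ≤ 1 := hQ ▸ Submodule.finrank_le _
        have h3 : LinearMap.ker g = ⊤ :=
          Submodule.eq_top_of_finrank_eq (by omega)
        exact hg0 (LinearMap.ker_eq_top.mp h3)
      have hker : LinearMap.ker (g.comp H.mkQ) = H := by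
        rw [LinearMap.ker_comp, hkg, Submodule.comap_bot, Submodule.ker_mkQ]
      refine ⟨?_, hker⟩
      intro h0
      apply hHtop
      rw [← hker, h0, LinearMap.ker_zero]
  rw [himg, Finset.card_image_of_injective _ hinj]
  have : (Finset.univ.filter (fun g : (W ⧸ H) →ₗ[F] F => g ≠ 0))
      = Finset.univ.erase 0 := by
    ext g; simp [Finset.mem_erase]
  rw [this, Finset.card_erase_of_mem (Finset.mem_univ _), Finset.card_univ,
    ← Nat.card_eq_fintype_card, card_dual, hQ, pow_one]

end aux

section aux2
variable {F : Type*} [Field F] [Fintype F]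
variable {W : Type*} [AddCommGroup W] [Module F W] [FiniteDimensional F W]

lemma hyperplane_count (W : Type*) [AddCommGroup W] [Module F W] [FiniteDimensional F W] :
    (Fintype.card F - 1) *
        Nat.card {H : Submodule F W // finrank F W = finrank F H + 1} + 1
      = Fintype.card F ^ finrank F W := by
  have hW : Finite W := Module.finite_of_finite F
  have : Finite (W →ₗ[F] F) := by
    have : Finite (Module.Dual F W) := Module.finite_of_finite F
    exact this
  cases nonempty_fintype (W →ₗ[F] F)
  have : Fintype (Submodule F W) := Fintype.ofFinite _
  set m := finrank F W with hm
  set S : Finset (W →ₗ[F] F) := Finset.univ.filter (· ≠ 0) with hS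
  set T : Finset (Submodule F W) :=
    Finset.univ.filter (fun H => m = finrank F H + 1) with hT
  have hmem : ∀ f ∈ S, LinearMap.ker f ∈ T := by
    intro f hf
    simp only [hS, Finset.mem_filter, Finset.mem_univ, true_and] at hf
    simp only [hT, Finset.mem_filter, Finset.mem_univ, true_and]
    have h1 := LinearMap.finrank_range_add_finrank_ker f
    have hr : finrank F (LinearMap.range f) = 1 := by
      have hle : finrank F (LinearMap.range f) ≤ 1 := by
        have := Submodule.finrank_le (LinearMap.range f)
        rwa [Module.finrank_self] at this
      have hne : finrank F (LinearMap.range f) ≠ 0 := by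
        rw [Ne, Submodule.finrank_eq_zero, LinearMap.range_eq_bot]
        exact hf
      omega
    omega
  have hcardS : S.card = Fintype.card F ^ m - 1 := by
    have : S = Finset.univ.erase 0 := by
      ext f; simp [hS, Finset.mem_erase]
    rw [this, Finset.card_erase_of_mem (Finset.mem_univ _), Finset.card_univ,
      ← Nat.card_eq_fintype_card, card_dual]
  have hfib := Finset.card_eq_sum_card_fiberwise hmem
  have hsum : ∀ H ∈ T, (S.filter (fun f => LinearMap.ker f = H)).card
      = Fintype.card F - 1 := by
    intro H hH
    simp only [hT, Finset.mem_filter, Finset.mem_univ, true_and] at hH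
    rw [hS, Finset.filter_filter]
    exact fiber_card H hH
  rw [Finset.sum_congr rfl hsum, Finset.sum_const, smul_eq_mul] at hfib
  have hcardT : Nat.card {H : Submodule F W // m = finrank F H + 1} = T.card := by
    rw [Nat.card_eq_fintype_card, hT, Fintype.card_subtype]
  have hq1 : 1 ≤ Fintype.card F ^ m := Nat.one_le_pow _ _ Fintype.card_pos
  rw [hcardT]
  rw [Nat.mul_comm] at hfib
  omega

end aux2

section aux3
variable {F : Type*} [Field F] [Fintype F]
variable {W : Type*} [AddCommGroup W] [Module F W] [FiniteDimensional F W]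

omit [Fintype F] in
lemma finrank_map_mkQ_add {x z : Submodule F W} (hxz : x ≤ z) :
    finrank F (z.map x.mkQ) + finrank F x = finrank F z := by
  have h1 := LinearMap.finrank_range_add_finrank_ker (x.mkQ.domRestrict z)
  rw [LinearMap.range_domRestrict, LinearMap.ker_domRestrict, Submodule.ker_mkQ] at h1
  rwa [LinearEquiv.finrank_eq (Submodule.comapSubtypeEquivOfLe hxz)] at h1

omit [Fintype F] in
lemma finrank_comap_mkQ (x : Submodule F W) (H : Submodule F (W ⧸ x)) :
    finrank F (H.comap x.mkQ) = finrank F H + finrank F x := by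
  have hmc : (H.comap x.mkQ).map x.mkQ = H := by
    rw [Submodule.map_comap_eq, Submodule.range_mkQ, top_inf_eq]
  have h2 := finrank_map_mkQ_add (x := x) (z := H.comap x.mkQ) (Submodule.le_comap_mkQ x H)
  rw [hmc] at h2
  exact h2.symm

lemma hyperplane_count_above (x : Submodule F W) :
    (Fintype.card F - 1) *
        Nat.card {z : Submodule F W // x ≤ z ∧ finrank F W = finrank F z + 1} + 1
      = Fintype.card F ^ (finrank F W - finrank F x) := by
  have hq := Submodule.finrank_quotient_add_finrank x
  have h0 := hyperplane_count (F := F) (W ⧸ x)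
  have e : {H : Submodule F (W ⧸ x) // finrank F (W ⧸ x) = finrank F H + 1} ≃
      {z : Submodule F W // x ≤ z ∧ finrank F W = finrank F z + 1} := by
    refine ⟨fun H => ⟨H.1.comap x.mkQ, Submodule.le_comap_mkQ x H.1, ?_⟩,
      fun z => ⟨z.1.map x.mkQ, ?_⟩, ?_, ?_⟩
    · have h1 := finrank_comap_mkQ x H.1
      have h2 := H.2
      omega
    · have h1 := finrank_map_mkQ_add (x := x) (z := z.1) z.2.1
      have h2 := z.2.2
      omega
    · rintro ⟨H, hH⟩
      apply Subtype.ext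
      simp only
      rw [Submodule.map_comap_eq, Submodule.range_mkQ, top_inf_eq]
    · rintro ⟨z, hz⟩
      apply Subtype.ext
      simp only
      rw [Submodule.comap_map_mkQ, sup_eq_right.mpr hz.1]
  rw [Nat.card_congr e] at h0
  rw [h0]
  congr 1
  omega

end aux3

section aux4
variable {F : Type*} [Field F] [Fintype F]
variable {V : Type*} [AddCommGroup V] [Module F V] [FiniteDimensional F V]

lemma hyperplane_count_interval {x y : Submodule F V} (hxy : x ≤ y) :
    (Fintype.card F - 1) *
        Nat.card {z : Submodule F V //
          z ≤ y ∧ finrank F y = finrank F z + 1 ∧ x ≤ z} + 1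
      = Fintype.card F ^ (finrank F y - finrank F x) := by
  have h := hyperplane_count_above (F := F) (W := ↥y) (Submodule.comap y.subtype x)
  have hx' : finrank F (Submodule.comap y.subtype x) = finrank F x :=
    LinearEquiv.finrank_eq (Submodule.comapSubtypeEquivOfLe hxy)
  rw [hx'] at h
  have hmapx : (Submodule.comap y.subtype x).map y.subtype = x := by
    rw [Submodule.map_comap_subtype, inf_eq_right.mpr hxy]
  have e : {w : Submodule F ↥y //
        Submodule.comap y.subtype x ≤ w ∧ finrank F ↥y = finrank F w + 1} ≃
      {z : Submodule F V // z ≤ y ∧ finrank F y = finrank F z + 1 ∧ x ≤ z} := by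
    refine ⟨fun w => ⟨w.1.map y.subtype, Submodule.map_subtype_le y w.1, ?_, ?_⟩,
      fun z => ⟨z.1.comap y.subtype, ?_, ?_⟩, ?_, ?_⟩
    · have h1 : finrank F (w.1.map y.subtype) = finrank F w.1 :=
        (LinearEquiv.finrank_eq (Submodule.equivSubtypeMap y w.1)).symm
      have h2 := w.2.2
      omega
    · exact hmapx.symm.trans_le (Submodule.map_mono w.2.1)
    · exact Submodule.comap_mono z.2.2.2
    · have hz : (z.1.comap y.subtype).map y.subtype = z.1 := by
        rw [Submodule.map_comap_subtype, inf_eq_right.mpr z.2.1]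
      have h1 : finrank F (z.1.comap y.subtype) = finrank F z.1 :=
        LinearEquiv.finrank_eq (Submodule.comapSubtypeEquivOfLe z.2.1)
      have h2 := z.2.2.1
      omega
    · rintro ⟨w, hw⟩
      apply Subtype.ext
      simp only
      rw [Submodule.comap_map_eq, Submodule.ker_subtype, sup_bot_eq]
    · rintro ⟨z, hz⟩
      apply Subtype.ext
      simp only
      rw [Submodule.map_comap_subtype, inf_eq_right.mpr hz.1]
  rw [Nat.card_congr e] at h
  exact h

end aux4

theorem stmt_13 (q N : ℕ) (F : Type*) [Field F] [Fintype F] (hF : Fintype.card F = q)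
    (V : Type*) [AddCommGroup V] [Module F V] [FiniteDimensional F V]
    (hV : finrank F V = N) [Fintype (Submodule F V)]
    (Astar : Matrix (Submodule F V) (Submodule F V) ℝ)
    (hAstar : ∀ y z : Submodule F V, Astar y z =
      if y = z then (q : ℝ) ^ (-(finrank F y : ℤ)) else 0)
    (dd : Submodule F V → (Submodule F V → ℝ))
    (hdd : ∀ y z : Submodule F V, dd y z = if z ≤ y then 1 else 0) :
    ∀ y : Submodule F V, Astar.mulVec (dd y) =
      ((q : ℝ) ^ (-(finrank F y : ℤ))) • dd y +
      (((q : ℝ) - 1) * (q : ℝ) ^ (-(finrank F y : ℤ))) •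
        ∑ z ∈ Finset.univ.filter (fun z : Submodule F V => z ≤ y ∧ finrank F y = finrank F z + 1), dd z := by
  intro y
  funext x
  have hq2 : 1 < q := hF ▸ Fintype.one_lt_card
  have hq0 : (q : ℝ) ≠ 0 := Nat.cast_ne_zero.mpr (by omega)
  have hL : Astar.mulVec (dd y) x
      = (q : ℝ) ^ (-(finrank F x : ℤ)) * (if x ≤ y then 1 else 0) := by
    simp only [Matrix.mulVec, dotProduct]
    rw [Finset.sum_eq_single x]
    · rw [hAstar, hdd, if_pos rfl]
    · intro j _ hj
      rw [hAstar, if_neg (fun h => hj h.symm), zero_mul]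
    · intro h; exact absurd (Finset.mem_univ x) h
  rw [hL]
  simp only [Pi.add_apply, Pi.smul_apply, smul_eq_mul, Finset.sum_apply]
  simp only [hdd]
  rw [Finset.sum_boole, Finset.filter_filter]
  by_cases hxy : x ≤ y
  · rw [if_pos hxy]
    have key := hyperplane_count_interval (F := F) hxy
    rw [hF] at key
    have hcard : Nat.card {z : Submodule F V //
          z ≤ y ∧ finrank F y = finrank F z + 1 ∧ x ≤ z}
        = (Finset.univ.filter (fun z : Submodule F V =>
            (z ≤ y ∧ finrank F y = finrank F z + 1) ∧ x ≤ z)).card := by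
      rw [Nat.card_eq_fintype_card, Fintype.card_subtype]
      congr 1
      ext z
      simp only [Finset.mem_filter, Finset.mem_univ, true_and]
      tauto
    rw [hcard] at key
    set C := (Finset.univ.filter (fun z : Submodule F V =>
        (z ≤ y ∧ finrank F y = finrank F z + 1) ∧ x ≤ z)).card
    have hdxy : finrank F x ≤ finrank F y := Submodule.finrank_mono hxy
    have keyR : ((q : ℝ) - 1) * C + 1 = (q : ℝ) ^ (finrank F y - finrank F x) := by
      have := congrArg (Nat.cast : ℕ → ℝ) key
      push_cast [Nat.cast_sub hq2.le] at this
      linarith [this]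
    have hzp : (q : ℝ) ^ (-(finrank F y : ℤ)) * (q : ℝ) ^ (finrank F y - finrank F x)
        = (q : ℝ) ^ (-(finrank F x : ℤ)) := by
      rw [← zpow_natCast (q : ℝ) (finrank F y - finrank F x), ← zpow_add₀ hq0]
      congr 1
      omega
    calc (q : ℝ) ^ (-(finrank F x : ℤ)) * 1
        = (q : ℝ) ^ (-(finrank F y : ℤ)) * (((q : ℝ) - 1) * C + 1) := by
          rw [keyR, hzp, mul_one]
      _ = (q : ℝ) ^ (-(finrank F y : ℤ)) * 1
          + ((q : ℝ) - 1) * (q : ℝ) ^ (-(finrank F y : ℤ)) * C := by ring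
  · rw [if_neg hxy]
    have hempty : (Finset.univ.filter (fun z : Submodule F V =>
        (z ≤ y ∧ finrank F y = finrank F z + 1) ∧ x ≤ z)) = ∅ := by
      ext z
      simp only [Finset.mem_filter, Finset.mem_univ, true_and, Finset.notMem_empty,
        iff_false]
      rintro ⟨⟨hzy, -⟩, hxz⟩
      exact hxy (hxz.trans hzy)
    rw [hempty]
    simp
end

section
/- For 0 ≤ i ≤ N, the vectors {y^{↓↓} : dim y ≥ i} form a basis for the sum of the eigenspaces of A corresponding to the eigenvalues θ_0, θ_1, …, θ_{N-i}, where θ_j = (q^{N-j} - q^j)/(q-1). -/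
/-!
Order the vectors `y^{↓↓}` by dimension. Counting the subspaces covering `x` inside `y` (via the
vectors of `y \ x`) and the hyperplanes of `x` (via duality) shows that `A` is triangular in this
basis: `A y^{↓↓} = θ_{N - dim y} y^{↓↓} + ∑_{w ⋗ y} w^{↓↓}`. So if `U_d` is the span of the
`y^{↓↓}` with `dim y ≥ d`, then `A - θ_{N-d}` maps `U_d` into `U_{d+1}`, with `U_0 = ℝ^X` and
`U_{N+1} = 0`. For any operator with such a flag and distinct `θ_j`, every `U_d` is the sum of the
eigenspaces for `θ_0, …, θ_{N-d}`: an element of `U_d` becomes an eigenvector for `θ_{N-d}` after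
subtracting a suitable element of the higher eigenspaces, on which `A - θ_{N-d}` is invertible;
conversely `A - θ_{N-d}` acts on a `θ_j`-eigenvector as a nonzero scalar, so the eigenvector
descends from `U_{d+1}` to `U_d`.
-/

open scoped Classical
open Module Matrix

/-- `y^{↓↓} = ∑_{z ≤ y} ẑ`, as a function on `P`. -/
noncomputable def downVec {P : Type*} [Preorder P] (y : P) : P → ℝ :=
  fun z => if z ≤ y then 1 else 0

theorem linearIndependent_downVec {P : Type*} [PartialOrder P] [Fintype P] :
    LinearIndependent ℝ (downVec (P := P)) := by
  rw [Fintype.linearIndependent_iff]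
  by_contra! ⟨g, hg, y₀, hy₀⟩
  obtain ⟨y, hy, hmax⟩ := (Finset.univ.filter (g · ≠ 0)).exists_maximal ⟨y₀, by simpa using hy₀⟩
  have h := congrFun hg y
  simp only [Finset.sum_apply, Pi.smul_apply, downVec, smul_eq_mul, mul_ite, mul_one, mul_zero,
    Pi.zero_apply] at h
  rw [Finset.sum_eq_single y (fun y' _ hne => ?_) (by simp), if_pos le_rfl] at h
  · exact (Finset.mem_filter.mp hy).2 h
  · refine ite_eq_right_iff.mpr fun hle => ?_
    by_contra hy'
    exact hne (le_antisymm (hmax (by simpa using hy') hle) hle)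

section FlagEigenspaces

variable {K M : Type*} [Field K] [AddCommGroup M] [Module K M]

theorem Module.End.iSup_eigenspace_le_map_sub {ι : Type*} (f : End K M) (μ : ι → K) (s : Set ι)
    {a : K} (ha : ∀ j ∈ s, μ j ≠ a) :
    ⨆ j ∈ s, f.eigenspace (μ j) ≤ (⨆ j ∈ s, f.eigenspace (μ j)).map (f - a • 1) := by
  refine iSup₂_le fun j hj u hu => ⟨(μ j - a)⁻¹ • u, ?_, ?_⟩
  · exact le_iSup₂ (f := fun j (_ : j ∈ s) => f.eigenspace (μ j)) j hj
      (Submodule.smul_mem _ _ hu)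
  · simp only [LinearMap.sub_apply, LinearMap.smul_apply, Module.End.one_apply, map_smul,
      Module.End.mem_eigenspace_iff.mp hu, smul_smul, ← sub_smul]
    rw [inv_mul_cancel₀ (sub_ne_zero.mpr (ha j hj)), one_smul]

variable {f : End K M} {V : ℕ → Submodule K M} {μ : ℕ → K} {n : ℕ}

theorem Module.End.le_iSup_eigenspace_of_flag (hμ : Set.InjOn μ (Set.Iio n)) (hbot : V 0 = ⊥)
    (hstep : ∀ j < n, V (j + 1) ≤ (V j).comap (f - μ j • 1)) {k : ℕ} (hk : k ≤ n) :
    V k ≤ ⨆ j ∈ Finset.range k, f.eigenspace (μ j) := by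
  induction k with
  | zero => simp [hbot]
  | succ k ih =>
    intro v hv
    have hne : ∀ j ∈ (Finset.range k : Set ℕ), μ j ≠ μ k := fun j hj h => by
      simp only [Finset.coe_range, Set.mem_Iio] at hj
      exact hj.ne (hμ (by simp; omega) (by simp; omega) h)
    obtain ⟨u, hu, huv⟩ := f.iSup_eigenspace_le_map_sub μ _ hne (ih (by omega) (hstep k hk hv))
    have hvu : v - u ∈ f.eigenspace (μ k) := by
      simp only [LinearMap.sub_apply, LinearMap.smul_apply, Module.End.one_apply] at huv
      rw [Module.End.mem_eigenspace_iff, map_sub, smul_sub, sub_eq_sub_iff_sub_eq_sub, huv]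
    rw [← sub_add_cancel v u, Finset.range_add_one, Finset.iSup_insert]
    exact Submodule.add_mem_sup hvu (by simpa using hu)

theorem Module.End.eigenspace_le_of_flag (hμ : Set.InjOn μ (Set.Iio n)) (htop : V n = ⊤)
    (hstep : ∀ j < n, V (j + 1) ≤ (V j).comap (f - μ j • 1)) {j k : ℕ} (hjk : j < k)
    (hk : k ≤ n) : f.eigenspace (μ j) ≤ V k := by
  intro v hv
  induction hk using Nat.decreasingInduction with
  | self => simp [htop]
  | of_succ k hkn ih =>
    have hsmul : (μ j - μ k) • v ∈ V k := by
      have := hstep k hkn (ih (by omega))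
      simpa [Module.End.mem_eigenspace_iff.mp hv, sub_smul] using this
    have hne : μ j - μ k ≠ 0 :=
      sub_ne_zero.mpr fun h => hjk.ne (hμ (by simp; omega) (by simp; omega) h)
    exact (Submodule.smul_mem_iff _ hne).mp hsmul

theorem Module.End.flag_eq_iSup_eigenspace (hμ : Set.InjOn μ (Set.Iio n)) (hbot : V 0 = ⊥)
    (htop : V n = ⊤) (hstep : ∀ j < n, V (j + 1) ≤ (V j).comap (f - μ j • 1)) {k : ℕ}
    (hk : k ≤ n) : V k = ⨆ j ∈ Finset.range k, f.eigenspace (μ j) :=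
  (le_iSup_eigenspace_of_flag hμ hbot hstep hk).antisymm <| iSup₂_le fun _ hj =>
    eigenspace_le_of_flag hμ htop hstep (Finset.mem_range.mp hj) hk

end FlagEigenspaces

theorem ncard_covBy_le_eq_ncard_covBy_ge {L : Type*} [Lattice L] [IsModularLattice L] {x y : L}
    (hxy : ¬x ≤ y) : {z | z ⋖ x ∧ z ≤ y}.ncard = {w | y ⋖ w ∧ x ≤ w}.ncard := by
  have hinf : {z | z ⋖ x ∧ z ≤ y} = {z | z = x ⊓ y ∧ x ⊓ y ⋖ x} := by
    ext z
    refine ⟨fun ⟨hzx, hzy⟩ => ?_, fun ⟨hz, hcov⟩ => ⟨hz ▸ hcov, hz ▸ inf_le_right⟩⟩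
    obtain h | h := hzx.wcovBy.eq_or_eq (le_inf hzx.le hzy) inf_le_left
    · exact ⟨h.symm, h ▸ hzx⟩
    · exact absurd (h ▸ inf_le_right) hxy
  have hsup : {w | y ⋖ w ∧ x ≤ w} = {w | w = x ⊔ y ∧ y ⋖ x ⊔ y} := by
    ext w
    refine ⟨fun ⟨hyw, hxw⟩ => ?_, fun ⟨hw, hcov⟩ => ⟨hw ▸ hcov, hw ▸ le_sup_left⟩⟩
    obtain h | h := hyw.wcovBy.eq_or_eq le_sup_right (sup_le hxw hyw.le)
    · exact absurd (h ▸ le_sup_left) hxy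
    · exact ⟨h.symm, h ▸ hyw⟩
  have hiff : x ⊓ y ⋖ x ↔ y ⋖ x ⊔ y :=
    ⟨covBy_sup_of_inf_covBy_left, fun h => by
      simpa [inf_comm] using
        inf_covBy_of_covBy_sup_left (a := y) (b := x) (by simpa [sup_comm] using h)⟩
  rw [hinf, hsup, hiff]
  by_cases h : y ⋖ x ⊔ y <;> simp [h]

namespace Submodule

section DivisionRing
variable {F W : Type*} [DivisionRing F] [AddCommGroup W] [Module F W] {x z : Submodule F W}

theorem span_singleton_sup_eq_iff_of_covBy (hxz : x ⋖ z) {v : W} :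
    span F {v} ⊔ x = z ↔ v ∈ z ∧ v ∉ x := by
  refine ⟨?_, fun ⟨hvz, hvx⟩ => ?_⟩
  · rintro rfl
    exact ⟨mem_sup_left (mem_span_singleton_self v), fun hvx => hxz.lt.ne (by
      rw [sup_eq_right.mpr ((span_singleton_le_iff_mem _ _).mpr hvx)])⟩
  · refine (hxz.wcovBy.eq_or_eq le_sup_right
      (sup_le ((span_singleton_le_iff_mem _ _).mpr hvz) hxz.le)).resolve_left fun h => hvx ?_
    exact h ▸ mem_sup_left (mem_span_singleton_self v)

variable [FiniteDimensional F W]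

theorem covBy_iff_finrank : x ⋖ z ↔ x ≤ z ∧ finrank F z = finrank F x + 1 := by
  refine ⟨fun h => ⟨h.le, ?_⟩, fun ⟨hle, hdim⟩ => ⟨?_, fun c hxc hcz => ?_⟩⟩
  · obtain ⟨v, hvz, hvx⟩ := SetLike.exists_of_lt h.lt
    rw [← (span_singleton_sup_eq_iff_of_covBy h).mpr ⟨hvz, hvx⟩, sup_comm,
      finrank_sup_span_singleton hvx]
  · exact lt_of_le_of_ne hle fun h => by subst h; omega
  · have := finrank_lt_finrank_of_lt hxc
    have := finrank_lt_finrank_of_lt hcz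
    omega

end DivisionRing

section FiniteField
variable {F W : Type*} [Field F] [Fintype F] [AddCommGroup W] [Module F W] [FiniteDimensional F W]

theorem ncard_coe (p : Submodule F W) : (p : Set W).ncard = Fintype.card F ^ finrank F p := by
  rw [← Nat.card_coe_set_eq, SetLike.coe_sort_coe, natCard_eq_pow_finrank (K := F),
    Nat.card_eq_fintype_card]

theorem ncard_sdiff_of_covBy {x z : Submodule F W} (h : x ⋖ z) :
    ((z : Set W) \ x).ncard = (Fintype.card F - 1) * Fintype.card F ^ finrank F x := by
  have : Finite W := Module.finite_of_finite F
  have hsum := Set.ncard_sdiff_add_ncard_of_subset (SetLike.coe_subset_coe.mpr h.le)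
  rw [ncard_coe, ncard_coe, (covBy_iff_finrank.mp h).2, pow_succ'] at hsum
  rw [Nat.sub_one_mul]
  omega

theorem ncard_covBy_le_mul_add {x y : Submodule F W} (hxy : x ≤ y) :
    {z | x ⋖ z ∧ z ≤ y}.ncard * ((Fintype.card F - 1) * Fintype.card F ^ finrank F x)
      + Fintype.card F ^ finrank F x = Fintype.card F ^ finrank F y := by
  have : Finite W := Module.finite_of_finite F
  have : Finite (Submodule F W) := Finite.of_injective _ SetLike.coe_injective
  set C := {z | x ⋖ z ∧ z ≤ y}
  have hunion : (y : Set W) \ x = ⋃ z ∈ C, (z : Set W) \ x := by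
    ext v
    simp only [Set.mem_sdiff, SetLike.mem_coe, Set.mem_iUnion, exists_prop]
    refine ⟨fun ⟨hvy, hvx⟩ => ⟨span F {v} ⊔ x, ⟨covBy_span_singleton_sup hvx,
      sup_le ((span_singleton_le_iff_mem _ _).mpr hvy) hxy⟩,
      mem_sup_left (mem_span_singleton_self v), hvx⟩,
      fun ⟨z, ⟨_, hzy⟩, hvz, hvx⟩ => ⟨hzy hvz, hvx⟩⟩
  have hdisj : C.PairwiseDisjoint fun z => (z : Set W) \ x := by
    refine fun z hz z' hz' hne => Set.disjoint_left.mpr fun v hv hv' => hne ?_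
    rw [← (span_singleton_sup_eq_iff_of_covBy hz.1).mpr hv,
      ← (span_singleton_sup_eq_iff_of_covBy hz'.1).mpr hv']
  calc C.ncard * _ + _ = ((y : Set W) \ x).ncard + (x : Set W).ncard := by
        rw [hunion, (Set.toFinite C).ncard_biUnion (fun _ _ => Set.toFinite _) hdisj,
          finsum_mem_congr rfl fun z hz => ncard_sdiff_of_covBy hz.1,
          finsum_mem_eq_finite_toFinset_sum _ (Set.toFinite C), Finset.sum_const, smul_eq_mul,
          Set.ncard_eq_toFinset_card C, ncard_coe]
    _ = _ := by rw [Set.ncard_sdiff_add_ncard_of_subset (SetLike.coe_subset_coe.mpr hxy), ncard_coe]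

theorem ncard_bot_covBy_mul_add_one :
    {z : Submodule F W | ⊥ ⋖ z}.ncard * (Fintype.card F - 1) + 1
      = Fintype.card F ^ finrank F W := by
  simpa using ncard_covBy_le_mul_add (bot_le : (⊥ : Submodule F W) ≤ ⊤)

theorem ncard_covBy_top_mul_add_one :
    {z : Submodule F W | z ⋖ ⊤}.ncard * (Fintype.card F - 1) + 1
      = Fintype.card F ^ finrank F W := by
  let e := Subspace.orderIsoFiniteDimensional (K := F) (V := W)
  have hcard :
      {z : Submodule F W | z ⋖ ⊤}.ncard = {Φ : Submodule F (Dual F W) | ⊥ ⋖ Φ}.ncard := by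
    rw [← Nat.card_coe_set_eq, ← Nat.card_coe_set_eq]
    refine Nat.card_congr ((e.toEquiv.trans OrderDual.ofDual).subtypeEquiv fun z => ?_)
    rw [Set.mem_ofPred_eq, ← apply_covBy_apply_iff e, OrderIso.map_top]
    exact ofDual_covBy_ofDual_iff.symm
  rw [hcard, ncard_bot_covBy_mul_add_one, Subspace.dual_finrank_eq]

theorem ncard_covBy_mul_add_one (x : Submodule F W) :
    {z | z ⋖ x}.ncard * (Fintype.card F - 1) + 1 = Fintype.card F ^ finrank F x := by
  have himage : {z | z ⋖ x} = map x.subtype '' {z | z ⋖ ⊤} := by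
    ext z
    refine ⟨fun hz => ?_, ?_⟩
    · have hmap : map x.subtype (comap x.subtype z) = z := by
        rw [map_comap_subtype, inf_eq_right.mpr hz.le]
      refine ⟨comap x.subtype z, ?_, hmap⟩
      rw [Set.mem_ofPred_eq, covBy_iff_finrank, finrank_top, ← finrank_map_subtype_eq, hmap]
      exact ⟨le_top, (covBy_iff_finrank.mp hz).2⟩
    · rintro ⟨z, hz, rfl⟩
      simpa using map_covBy_of_injective x.injective_subtype hz
  rw [himage, Set.ncard_image_of_injective _ (map_injective_of_injective x.injective_subtype),
    ncard_covBy_top_mul_add_one]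

end FiniteField

end Submodule

namespace SubspaceLattice
variable {F V : Type*} [Field F] [AddCommGroup V] [Module F V]

noncomputable def theta (q N j : ℕ) : ℝ := ((q : ℝ) ^ (N - j) - (q : ℝ) ^ j) / ((q : ℝ) - 1)

theorem theta_strictAnti {q : ℕ} (hq : 1 < q) (N : ℕ) : StrictAnti (theta q N) := by
  intro j j' hjj'
  have hQ : (1 : ℝ) < q := by exact_mod_cast hq
  rw [theta, theta, div_lt_div_iff_of_pos_right (by linarith)]
  have := pow_lt_pow_right₀ hQ hjj'
  have := pow_le_pow_right₀ hQ.le (Nat.sub_le_sub_left hjj'.le N)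
  linarith

noncomputable def downSpan (d : ℕ) : Submodule ℝ (Submodule F V → ℝ) :=
  Submodule.span ℝ (Set.range fun y : {y : Submodule F V // d ≤ finrank F y} => downVec y.1)

theorem downSpan_eq_bot [FiniteDimensional F V] {d : ℕ} (hd : finrank F V < d) :
    downSpan (F := F) (V := V) d = ⊥ := by
  refine Submodule.span_eq_bot.mpr ?_
  rintro _ ⟨y, rfl⟩
  exact absurd (y.2.trans (Submodule.finrank_le y.1)) (by omega)

theorem downSpan_zero [Fintype (Submodule F V)] : downSpan (F := F) (V := V) 0 = ⊤ := by
  refine eq_top_iff.mpr ((linearIndependent_downVec.span_eq_top_of_card_eq_finrank' ?_).ge.trans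
    (Submodule.span_mono ?_))
  · rw [Module.finrank_fintype_fun_eq_card]
  · rintro _ ⟨y, rfl⟩
    exact ⟨⟨y, Nat.zero_le _⟩, rfl⟩

variable [Fintype F]

noncomputable def adjMatrix : Matrix (Submodule F V) (Submodule F V) ℝ := fun y z =>
  if z ⋖ y then 1 else if y ⋖ z then (Fintype.card F : ℝ) ^ finrank F y else 0

variable [Fintype (Submodule F V)]

theorem adjMatrix_mulVec_downVec_apply (x y : Submodule F V) :
    (adjMatrix *ᵥ downVec y) x = ({z | z ⋖ x ∧ z ≤ y}.ncard : ℝ)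
      + (Fintype.card F : ℝ) ^ finrank F x * {z | x ⋖ z ∧ z ≤ y}.ncard := by
  have hterm : ∀ z, adjMatrix x z * downVec y z = (if z ⋖ x ∧ z ≤ y then 1 else 0)
      + (Fintype.card F : ℝ) ^ finrank F x * (if x ⋖ z ∧ z ≤ y then 1 else 0) := fun z => by
    simp only [adjMatrix, downVec]
    by_cases h : z ⋖ x
    · have : ¬x ⋖ z := fun h' => h.lt.not_gt h'.lt
      simp [h, this]
    · split_ifs <;> simp_all
  simp only [Matrix.mulVec, dotProduct, hterm, Finset.sum_add_distrib, ← Finset.mul_sum,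
    Finset.sum_boole, Set.ncard_eq_toFinset_card', Set.toFinset_ofPred]

variable [FiniteDimensional F V]

theorem adjMatrix_mulVec_downVec_apply_of_le {x y : Submodule F V} (hxy : x ≤ y) :
    (adjMatrix *ᵥ downVec y) x
      = theta (Fintype.card F) (finrank F V) (finrank F V - finrank F y) + {w | y ⋖ w}.ncard := by
  have hq : 1 ≤ Fintype.card F := Fintype.card_pos
  have hQ : (1 : ℝ) < Fintype.card F := by exact_mod_cast Fintype.one_lt_card
  have h1 := Submodule.ncard_covBy_mul_add_one x
  have h2 := Submodule.ncard_covBy_le_mul_add hxy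
  have h3 := Submodule.ncard_covBy_le_mul_add (le_top : y ≤ ⊤)
  simp only [le_top, and_true, finrank_top] at h3
  rw [← Nat.cast_inj (R := ℝ)] at h1 h2 h3
  push_cast [Nat.cast_sub hq] at h1 h2 h3
  have hdown : {z | z ⋖ x ∧ z ≤ y} = {z | z ⋖ x} :=
    Set.ext fun z => and_iff_left_of_imp fun h => h.le.trans hxy
  rw [adjMatrix_mulVec_downVec_apply, hdown, theta, Nat.sub_sub_self (Submodule.finrank_le y)]
  set Q := (Fintype.card F : ℝ)
  have hQ1 : Q - 1 ≠ 0 := sub_ne_zero.mpr hQ.ne'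
  have hN : Q ^ finrank F V = Q ^ finrank F y * Q ^ (finrank F V - finrank F y) := by
    rw [← pow_add, Nat.add_sub_cancel' (Submodule.finrank_le y)]
  -- `(q^k - 1)/(q - 1) + q^k (q^m - q^k)/(q^k (q - 1)) = (q^m - 1)/(q - 1)`
  -- `= θ_{N-m} + (q^N - q^m)/(q^m (q - 1))`, where `k = dim x`, `m = dim y`.
  rw [div_add' _ _ _ hQ1, eq_div_iff hQ1]
  refine mul_left_cancel₀ (pow_ne_zero (finrank F y) (by positivity : Q ≠ 0)) ?_
  linear_combination Q ^ finrank F y * h1 + h2 * Q ^ finrank F y - h3 - hN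

theorem adjMatrix_mulVec_downVec (y : Submodule F V) :
    adjMatrix *ᵥ downVec y
      = theta (Fintype.card F) (finrank F V) (finrank F V - finrank F y) • downVec y
        + ∑ w ∈ Finset.univ.filter (y ⋖ ·), downVec w := by
  ext x
  have hsum : (∑ w ∈ Finset.univ.filter (y ⋖ ·), downVec w) x = {w | y ⋖ w ∧ x ≤ w}.ncard := by
    simp only [Finset.sum_apply, downVec, Finset.sum_boole, Finset.filter_filter,
      Set.ncard_eq_toFinset_card', Set.toFinset_ofPred]
  rw [Pi.add_apply, Pi.smul_apply, hsum, smul_eq_mul]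
  by_cases hxy : x ≤ y
  · have hup : {w | y ⋖ w ∧ x ≤ w} = {w | y ⋖ w} :=
      Set.ext fun w => and_iff_left_of_imp fun h => hxy.trans h.le
    rw [adjMatrix_mulVec_downVec_apply_of_le hxy, hup, downVec, if_pos hxy, mul_one]
  · have hempty : {z | x ⋖ z ∧ z ≤ y} = ∅ :=
      Set.eq_empty_of_forall_notMem fun z hz => hxy (hz.1.le.trans hz.2)
    simp [adjMatrix_mulVec_downVec_apply, downVec, hxy, hempty,
      ncard_covBy_le_eq_ncard_covBy_ge hxy]

theorem downSpan_le_comap (d : ℕ) :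
    downSpan d ≤ (downSpan (d + 1)).comap ((adjMatrix (F := F) (V := V)).mulVecLin
      - theta (Fintype.card F) (finrank F V) (finrank F V - d) • 1) := by
  refine Submodule.span_le.mpr ?_
  rintro _ ⟨⟨y, hy⟩, rfl⟩
  have hcovers :
      ∑ w ∈ Finset.univ.filter (y ⋖ ·), downVec w ∈ downSpan (F := F) (V := V) (d + 1) :=
    Submodule.sum_mem _ fun w hw => Submodule.subset_span
      ⟨⟨w, by rw [(Submodule.covBy_iff_finrank.mp (Finset.mem_filter.mp hw).2).2]; omega⟩, rfl⟩
  have hy' : finrank F y = d ∨ downVec y ∈ downSpan (F := F) (V := V) (d + 1) :=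
    hy.eq_or_lt.imp Eq.symm fun h => Submodule.subset_span ⟨⟨y, h⟩, rfl⟩
  simp only [SetLike.mem_coe, Submodule.mem_comap, LinearMap.sub_apply, LinearMap.smul_apply,
    Module.End.one_apply, Matrix.mulVecLin_apply, adjMatrix_mulVec_downVec]
  rcases hy' with h | h
  · rwa [h, add_sub_cancel_left]
  · exact Submodule.sub_mem _ (Submodule.add_mem _ (Submodule.smul_mem _ _ h) hcovers)
      (Submodule.smul_mem _ _ h)

-- The flag is `k ↦ downSpan (N + 1 - k)`, so that its `j`-th step carries the eigenvalue `θ_j`.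
theorem downSpan_eq_iSup_eigenspace {i : ℕ} (hi : i ≤ finrank F V) :
    downSpan i = ⨆ j ∈ Finset.range (finrank F V - i + 1), Module.End.eigenspace
      (adjMatrix (F := F) (V := V)).mulVecLin (theta (Fintype.card F) (finrank F V) j) := by
  have hflag := Module.End.flag_eq_iSup_eigenspace (f := adjMatrix.mulVecLin)
    (V := fun k => downSpan (F := F) (V := V) (finrank F V + 1 - k))
    (μ := theta (Fintype.card F) (finrank F V)) (n := finrank F V + 1) (k := finrank F V - i + 1)
    ?_ (downSpan_eq_bot (by omega)) (by simpa using downSpan_zero) ?_ (by omega)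
  · rwa [show finrank F V + 1 - (finrank F V - i + 1) = i by omega] at hflag
  · exact (theta_strictAnti Fintype.one_lt_card _).injective.injOn
  · intro j hj
    have h := downSpan_le_comap (F := F) (V := V) (finrank F V - j)
    rw [Nat.sub_sub_self (by omega)] at h
    rwa [Nat.add_sub_add_right, show finrank F V + 1 - j = finrank F V - j + 1 by omega]

end SubspaceLattice

theorem stmt_15 (q N i : ℕ) (F : Type*) [Field F] [Fintype F] (hF : Fintype.card F = q)
    (V : Type*) [AddCommGroup V] [Module F V] [FiniteDimensional F V]
    (hV : finrank F V = N) (hiN : i ≤ N) [Fintype (Submodule F V)]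
    (A : Matrix (Submodule F V) (Submodule F V) ℝ)
    (hA : ∀ y z : Submodule F V, A y z =
      if z ≤ y ∧ finrank F y = finrank F z + 1 then 1
      else if y ≤ z ∧ finrank F z = finrank F y + 1 then (q : ℝ) ^ finrank F y
      else 0)
    (dd : Submodule F V → (Submodule F V → ℝ))
    (hdd : ∀ y z : Submodule F V, dd y z = if z ≤ y then 1 else 0) :
    LinearIndependent ℝ (fun y : {y : Submodule F V // i ≤ finrank F y} => dd y) ∧
    Submodule.span ℝ (Set.range (fun y : {y : Submodule F V // i ≤ finrank F y} => dd (y : Submodule F V))) =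
      ⨆ j ∈ Finset.range (N - i + 1),
        Module.End.eigenspace A.mulVecLin (((q : ℝ) ^ (N - j) - (q : ℝ) ^ j) / ((q : ℝ) - 1)) := by
  subst hF hV
  obtain rfl : A = SubspaceLattice.adjMatrix := Matrix.ext fun y z => by
    rw [hA, SubspaceLattice.adjMatrix, Submodule.covBy_iff_finrank, Submodule.covBy_iff_finrank]
    congr
  obtain rfl : dd = downVec := funext fun y => funext (hdd y)
  exact ⟨linearIndependent_downVec.comp _ Subtype.val_injective,
    SubspaceLattice.downSpan_eq_iSup_eigenspace hiN⟩
end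

section
/- The matrices A and A* of L_N(q) satisfy the tridiagonal relation A³A* − (q + q^{-1} + 1)A²A*A + (q + q^{-1} + 1)AA*A² − A*A³ = q^{N-2}(q+1)²(AA* − A*A). -/
open scoped Classical
open Module

/-! Split `A = L + R` into its lowering part `L` and raising part `R`. A subspace `y` of dimension
`d` has `[N - d]_q` covers and `[d]_q` hyperplanes (`[m]_q = 1 + q + ⋯ + q^(m-1)`), while two
distinct subspaces of equal dimension have a common cover iff they have a common hyperplane, both
being unique. Hence `RL = q LR + Φ` with `Φ` diagonal, `Φ_y = q^d ([N - d]_q - [d]_q)`, and `Φ`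
satisfies `ΦL = q²LΦ - q^N (q + 1) L` and `RΦ = q²ΦR - q^N (q + 1) R`. Since `A*` scales `L` and
`R` by `q⁻¹` and `q`, we have `A* A = (q⁻¹L + qR) A*`, and the tridiagonal relation becomes a
cubic identity in `L`, `R`, `Φ`, which follows by bringing every word into the normal order
`L ⋯ L Φ R ⋯ R`. -/

section Algebra
variable {𝕜 𝔄 : Type*} [Field 𝕜] [Ring 𝔄] [Algebra 𝕜 𝔄]

theorem tridiagonal_of_mul_eq_mul {A D T : 𝔄} (hDA : D * A = T * D) (β : 𝕜) :
    A ^ 3 * D - β • (A ^ 2 * D * A) + β • (A * D * A ^ 2) - D * A ^ 3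
      = (A ^ 3 - β • (A ^ 2 * T) + β • (A * T ^ 2) - T ^ 3) * D := by
  have hDA2 : D * A ^ 2 = T ^ 2 * D := by
    rw [sq, sq, ← mul_assoc, hDA, mul_assoc, hDA, mul_assoc]
  have hDA3 : D * A ^ 3 = T ^ 3 * D := by
    rw [pow_succ, ← mul_assoc, hDA2, mul_assoc, hDA, ← mul_assoc, ← pow_succ]
  simp only [sub_mul, add_mul, smul_mul_assoc, mul_assoc, hDA, hDA2, hDA3]

theorem cubic_eq_of_qCommutation {q c : 𝕜} (hq : q ≠ 0) {L R Φ : 𝔄}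
    (hRL : R * L = q • (L * R) + Φ)
    (hΦL : Φ * L = q ^ 2 • (L * Φ) - c • L) (hRΦ : R * Φ = q ^ 2 • (Φ * R) - c • R) :
    (L + R) ^ 3 - (q + q⁻¹ + 1) • ((L + R) ^ 2 * (q⁻¹ • L + q • R))
      + (q + q⁻¹ + 1) • ((L + R) * (q⁻¹ • L + q • R) ^ 2) - (q⁻¹ • L + q • R) ^ 3
      = (c * (q + 1) / q ^ 2) • (L + R - (q⁻¹ • L + q • R)) := by
  have hLRL : L * (R * L) = q • (L * (L * R)) + L * Φ := by
    rw [hRL, mul_add, mul_smul_comm]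
  have hRLL : R * (L * L) = (q * q) • (L * (L * R)) + q • (L * Φ) + Φ * L := by
    rw [← mul_assoc, hRL, add_mul, smul_mul_assoc, mul_assoc, hLRL, smul_add, smul_smul]
  have hRLR : R * (L * R) = q • (L * (R * R)) + Φ * R := by
    rw [← mul_assoc, hRL, add_mul, smul_mul_assoc, mul_assoc]
  have hRRL : R * (R * L) = (q * q) • (L * (R * R)) + q • (Φ * R) + R * Φ := by
    rw [hRL, mul_add, mul_smul_comm, hRLR, smul_add, smul_smul]
  simp only [pow_succ, pow_zero, one_mul, add_mul, mul_add, smul_mul_assoc, mul_smul_comm,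
    mul_assoc, smul_add, smul_smul, smul_sub]
  simp only [hLRL, hRLL, hRLR, hRRL, hΦL, hRΦ]
  match_scalars <;> field_simp <;> ring

theorem tridiagonal_relation_of_qCommutation {q c : 𝕜} (hq : q ≠ 0) {L R Φ D : 𝔄}
    (hDL : D * L = q⁻¹ • (L * D)) (hDR : D * R = q • (R * D))
    (hRL : R * L = q • (L * R) + Φ)
    (hΦL : Φ * L = q ^ 2 • (L * Φ) - c • L) (hRΦ : R * Φ = q ^ 2 • (Φ * R) - c • R) :
    (L + R) ^ 3 * D - (q + q⁻¹ + 1) • ((L + R) ^ 2 * D * (L + R))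
      + (q + q⁻¹ + 1) • ((L + R) * D * (L + R) ^ 2) - D * (L + R) ^ 3
      = (c * (q + 1) / q ^ 2) • ((L + R) * D - D * (L + R)) := by
  have hDA : D * (L + R) = (q⁻¹ • L + q • R) * D := by
    rw [mul_add, add_mul, hDL, hDR, smul_mul_assoc, smul_mul_assoc]
  rw [tridiagonal_of_mul_eq_mul hDA, cubic_eq_of_qCommutation hq hRL hΦL hRΦ, hDA,
    smul_mul_assoc, sub_mul]

end Algebra

section Subspaces
variable {K V : Type*} [Field K] [AddCommGroup V] [Module K V]

theorem card_finrank_eq_one [Finite K] {n : ℕ} (h : finrank K V = n) :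
    Nat.card {ℓ : Submodule K V // finrank K ℓ = 1} = ∑ i ∈ Finset.range n, Nat.card K ^ i := by
  rw [← Nat.card_congr (Projectivization.equivSubmodule K V),
    Projectivization.card_of_finrank K V h]

variable [FiniteDimensional K V]

theorem Submodule.common_cover_iff {y z w : Submodule K V} (hyz : y ≠ z) :
    (y ≤ w ∧ finrank K w = finrank K y + 1) ∧ (z ≤ w ∧ finrank K w = finrank K z + 1) ↔
      w = y ⊔ z ∧ finrank K y = finrank K z ∧ finrank K ↥(y ⊔ z) = finrank K y + 1 := by
  constructor
  · rintro ⟨⟨hyw, hw⟩, hzw, hw'⟩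
    have hlt : y < y ⊔ z := left_lt_sup.mpr fun hzy =>
      hyz (Submodule.eq_of_le_of_finrank_eq hzy (by omega)).symm
    have h1 := Submodule.finrank_lt_finrank_of_lt hlt
    have h2 := Submodule.finrank_mono (sup_le hyw hzw)
    exact ⟨(Submodule.eq_of_le_of_finrank_eq (sup_le hyw hzw) (by omega)).symm, by omega,
      by omega⟩
  · rintro ⟨rfl, hd, hs⟩
    exact ⟨⟨le_sup_left, hs⟩, le_sup_right, by omega⟩

theorem Submodule.common_hyperplane_iff {y z w : Submodule K V} (hyz : y ≠ z) :
    (w ≤ y ∧ finrank K y = finrank K w + 1) ∧ (w ≤ z ∧ finrank K z = finrank K w + 1) ↔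
      w = y ⊓ z ∧ finrank K y = finrank K z ∧ finrank K y = finrank K ↥(y ⊓ z) + 1 := by
  constructor
  · rintro ⟨⟨hwy, hw⟩, hwz, hw'⟩
    have hlt : y ⊓ z < y := inf_lt_left.mpr fun hyz' =>
      hyz (Submodule.eq_of_le_of_finrank_eq hyz' (by omega))
    have h1 := Submodule.finrank_lt_finrank_of_lt hlt
    have h2 := Submodule.finrank_mono (le_inf hwy hwz)
    exact ⟨Submodule.eq_of_le_of_finrank_eq (le_inf hwy hwz) (by omega), by omega, by omega⟩
  · rintro ⟨rfl, hd, hi⟩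
    exact ⟨⟨inf_le_left, hi⟩, inf_le_right, by omega⟩

theorem Submodule.finrank_comap_mkQ (y : Submodule K V) (ℓ : Submodule K (V ⧸ y)) :
    finrank K (ℓ.comap y.mkQ) = finrank K ℓ + finrank K y := by
  have h := LinearMap.finrank_range_add_finrank_ker (y.mkQ.domRestrict (ℓ.comap y.mkQ))
  rwa [LinearMap.range_domRestrict, Submodule.map_comap_eq_of_surjective y.mkQ_surjective,
    LinearMap.ker_domRestrict, Submodule.ker_mkQ,
    (Submodule.comapSubtypeEquivOfLe (Submodule.le_comap_mkQ y ℓ)).finrank_eq, eq_comm] at h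

variable [Finite K]

theorem card_covers (y : Submodule K V) :
    Nat.card {w : Submodule K V // y ≤ w ∧ finrank K w = finrank K y + 1}
      = ∑ i ∈ Finset.range (finrank K V - finrank K y), Nat.card K ^ i := by
  have e : {ℓ : Submodule K (V ⧸ y) // finrank K ℓ = 1}
      ≃ {w : Submodule K V // y ≤ w ∧ finrank K w = finrank K y + 1} :=
    ((Submodule.comapMkQRelIso y).toEquiv.subtypeEquiv fun ℓ => by
        change _ ↔ finrank K (ℓ.comap y.mkQ) = _
        rw [Submodule.finrank_comap_mkQ]
        omega).trans
      (Equiv.subtypeSubtypeEquivSubtypeInter (y ≤ ·) _)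
  rw [← Nat.card_congr e, card_finrank_eq_one]
  have := y.finrank_quotient_add_finrank
  omega

theorem card_hyperplanes (y : Submodule K V) :
    Nat.card {w : Submodule K V // w ≤ y ∧ finrank K y = finrank K w + 1}
      = ∑ i ∈ Finset.range (finrank K y), Nat.card K ^ i := by
  have hy := Subspace.finrank_add_finrank_dualAnnihilator_eq y
  have e : {w : Submodule K V // w ≤ y ∧ finrank K y = finrank K w + 1}
      ≃ {u : Submodule K (Dual K V) // y.dualAnnihilator ≤ u
          ∧ finrank K u = finrank K y.dualAnnihilator + 1} :=
    (Subspace.orderIsoFiniteDimensional.toEquiv.trans OrderDual.ofDual).subtypeEquiv fun w => by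
      have hw := Subspace.finrank_add_finrank_dualAnnihilator_eq w
      change _ ↔ y.dualAnnihilator ≤ w.dualAnnihilator ∧ finrank K w.dualAnnihilator = _
      rw [Subspace.dualAnnihilator_le_dualAnnihilator_iff]
      exact and_congr_right fun _ => by omega
  rw [Nat.card_congr e, card_covers, Subspace.dual_finrank_eq]
  congr 2
  omega

end Subspaces

section Matrices
variable (K V : Type*) [Field K] [AddCommGroup V] [Module K V]

noncomputable def loweringMatrix : Matrix (Submodule K V) (Submodule K V) ℝ :=
  Matrix.of fun y z => if z ≤ y ∧ finrank K y = finrank K z + 1 then 1 else 0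

noncomputable def raisingMatrix (q : ℝ) : Matrix (Submodule K V) (Submodule K V) ℝ :=
  Matrix.of fun y z => if y ≤ z ∧ finrank K z = finrank K y + 1 then q ^ finrank K y else 0

noncomputable def dualAdjacencyMatrix (q : ℝ) : Matrix (Submodule K V) (Submodule K V) ℝ :=
  Matrix.diagonal fun y => q ^ (-(finrank K y : ℤ))

-- The closed form of `q^d ([N - d]_q - [d]_q)` with `d = dim y`, `N = dim V`.
noncomputable def qCommutatorMatrix (q : ℝ) : Matrix (Submodule K V) (Submodule K V) ℝ :=
  Matrix.diagonal fun y => (q ^ finrank K V - q ^ (2 * finrank K y)) / (q - 1)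

variable {K V} {q : ℝ}

theorem loweringMatrix_add_raisingMatrix_apply (y z : Submodule K V) :
    (loweringMatrix K V + raisingMatrix K V q) y z =
      if z ≤ y ∧ finrank K y = finrank K z + 1 then 1
      else if y ≤ z ∧ finrank K z = finrank K y + 1 then q ^ finrank K y
      else 0 := by
  simp only [Matrix.add_apply, loweringMatrix, raisingMatrix, Matrix.of_apply]
  by_cases h : z ≤ y ∧ finrank K y = finrank K z + 1
  · have h' : ¬(y ≤ z ∧ finrank K z = finrank K y + 1) := by omega
    rw [if_pos h, if_neg h', if_pos h, add_zero]
  · rw [if_neg h, if_neg h, zero_add]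

variable [Fintype (Submodule K V)]

theorem dualAdjacencyMatrix_mul_loweringMatrix (hq : q ≠ 0) :
    dualAdjacencyMatrix K V q * loweringMatrix K V
      = q⁻¹ • (loweringMatrix K V * dualAdjacencyMatrix K V q) := by
  ext y z
  simp only [dualAdjacencyMatrix, loweringMatrix, Matrix.diagonal_mul, Matrix.mul_diagonal,
    Matrix.smul_apply, Matrix.of_apply, smul_eq_mul]
  split_ifs with h
  · rw [h.2, Nat.cast_succ, neg_add, zpow_add₀ hq, zpow_neg_one]
    ring
  · simp

theorem dualAdjacencyMatrix_mul_raisingMatrix (hq : q ≠ 0) :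
    dualAdjacencyMatrix K V q * raisingMatrix K V q
      = q • (raisingMatrix K V q * dualAdjacencyMatrix K V q) := by
  ext y z
  simp only [dualAdjacencyMatrix, raisingMatrix, Matrix.diagonal_mul, Matrix.mul_diagonal,
    Matrix.smul_apply, Matrix.of_apply, smul_eq_mul]
  split_ifs with h
  · rw [h.2, Nat.cast_succ, neg_add, zpow_add₀ hq, zpow_neg_one]
    field_simp
  · simp

theorem qCommutatorMatrix_mul_loweringMatrix (hq : q ≠ 1) :
    qCommutatorMatrix K V q * loweringMatrix K V
      = q ^ 2 • (loweringMatrix K V * qCommutatorMatrix K V q)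
        - (q ^ finrank K V * (q + 1)) • loweringMatrix K V := by
  have hq1 : q - 1 ≠ 0 := sub_ne_zero.mpr hq
  ext y z
  simp only [qCommutatorMatrix, loweringMatrix, Matrix.diagonal_mul, Matrix.mul_diagonal,
    Matrix.smul_apply, Matrix.sub_apply, Matrix.of_apply, smul_eq_mul]
  split_ifs with h
  · rw [h.2]
    field_simp
    ring
  · simp

theorem raisingMatrix_mul_qCommutatorMatrix (hq : q ≠ 1) :
    raisingMatrix K V q * qCommutatorMatrix K V q
      = q ^ 2 • (qCommutatorMatrix K V q * raisingMatrix K V q)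
        - (q ^ finrank K V * (q + 1)) • raisingMatrix K V q := by
  have hq1 : q - 1 ≠ 0 := sub_ne_zero.mpr hq
  ext y z
  simp only [qCommutatorMatrix, raisingMatrix, Matrix.diagonal_mul, Matrix.mul_diagonal,
    Matrix.smul_apply, Matrix.sub_apply, Matrix.of_apply, smul_eq_mul]
  split_ifs with h
  · rw [h.2]
    field_simp
    ring
  · simp

theorem raisingMatrix_mul_loweringMatrix_apply (y z : Submodule K V) :
    (raisingMatrix K V q * loweringMatrix K V) y z = ∑ w,
      if (y ≤ w ∧ finrank K w = finrank K y + 1) ∧ (z ≤ w ∧ finrank K w = finrank K z + 1)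
      then q ^ finrank K y else 0 := by
  simp only [Matrix.mul_apply, raisingMatrix, loweringMatrix, Matrix.of_apply]
  refine Finset.sum_congr rfl fun w _ => ?_
  split_ifs <;> simp_all
  omega

theorem loweringMatrix_mul_raisingMatrix_apply (y z : Submodule K V) :
    q * (loweringMatrix K V * raisingMatrix K V q) y z = ∑ w,
      if (w ≤ y ∧ finrank K y = finrank K w + 1) ∧ (w ≤ z ∧ finrank K z = finrank K w + 1)
      then q ^ finrank K y else 0 := by
  simp only [Matrix.mul_apply, raisingMatrix, loweringMatrix, Matrix.of_apply, Finset.mul_sum]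
  refine Finset.sum_congr rfl fun w _ => ?_
  split_ifs <;> simp_all [pow_succ']

theorem sum_ite_common_cover_eq_sum_ite_common_hyperplane [FiniteDimensional K V]
    {y z : Submodule K V} (hyz : y ≠ z) (c : ℝ) :
    (∑ w, if (y ≤ w ∧ finrank K w = finrank K y + 1) ∧ (z ≤ w ∧ finrank K w = finrank K z + 1)
      then c else 0)
    = ∑ w, if (w ≤ y ∧ finrank K y = finrank K w + 1) ∧ (w ≤ z ∧ finrank K z = finrank K w + 1)
      then c else 0 := by
  simp only [Submodule.common_cover_iff hyz, Submodule.common_hyperplane_iff hyz, ite_and,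
    Finset.sum_ite_eq', Finset.mem_univ, if_true]
  have := Submodule.finrank_sup_add_finrank_inf_eq y z
  by_cases hd : finrank K y = finrank K z
  · rw [if_pos hd, if_pos hd]
    exact if_congr (by omega) rfl rfl
  · rw [if_neg hd, if_neg hd]

theorem raisingMatrix_mul_loweringMatrix [Finite K] [FiniteDimensional K V] :
    raisingMatrix K V (Nat.card K) * loweringMatrix K V
      = (Nat.card K : ℝ) • (loweringMatrix K V * raisingMatrix K V (Nat.card K))
        + qCommutatorMatrix K V (Nat.card K) := by
  ext y z
  rw [Matrix.add_apply, Matrix.smul_apply, smul_eq_mul, raisingMatrix_mul_loweringMatrix_apply,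
    loweringMatrix_mul_raisingMatrix_apply]
  obtain rfl | hyz := eq_or_ne y z
  · have hq : (Nat.card K : ℝ) - 1 ≠ 0 := by
      rw [sub_ne_zero, Nat.cast_ne_one]
      exact Finite.one_lt_card.ne'
    simp only [and_self, ← Finset.sum_filter, Finset.sum_const, nsmul_eq_mul,
      ← Fintype.card_subtype, ← Nat.card_eq_fintype_card, card_covers, card_hyperplanes,
      qCommutatorMatrix, Matrix.diagonal_apply_eq, Nat.cast_sum, Nat.cast_pow]
    obtain ⟨k, hk⟩ := Nat.exists_eq_add_of_le (Submodule.finrank_le y)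
    rw [hk, Nat.add_sub_cancel_left, ← sub_eq_iff_eq_add', eq_div_iff hq]
    linear_combination (Nat.card K : ℝ) ^ finrank K y
      * (geom_sum_mul (Nat.card K : ℝ) k - geom_sum_mul (Nat.card K : ℝ) (finrank K y))
  · rw [sum_ite_common_cover_eq_sum_ite_common_hyperplane hyz, qCommutatorMatrix,
      Matrix.diagonal_apply_ne _ hyz, add_zero]

end Matrices

theorem stmt_16 (q N : ℕ) (F : Type*) [Field F] [Fintype F] (hF : Fintype.card F = q)
    (V : Type*) [AddCommGroup V] [Module F V] [FiniteDimensional F V]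
    (hV : finrank F V = N) [Fintype (Submodule F V)]
    (A : Matrix (Submodule F V) (Submodule F V) ℝ)
    (hA : ∀ y z : Submodule F V, A y z =
      if z ≤ y ∧ finrank F y = finrank F z + 1 then 1
      else if y ≤ z ∧ finrank F z = finrank F y + 1 then (q : ℝ) ^ finrank F y
      else 0)
    (Astar : Matrix (Submodule F V) (Submodule F V) ℝ)
    (hAstar : ∀ y z : Submodule F V, Astar y z =
      if y = z then (q : ℝ) ^ (-(finrank F y : ℤ)) else 0) :
    A ^ 3 * Astar - ((q : ℝ) + (q : ℝ)⁻¹ + 1) • (A ^ 2 * Astar * A)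
      + ((q : ℝ) + (q : ℝ)⁻¹ + 1) • (A * Astar * A ^ 2) - Astar * A ^ 3
    = ((q : ℝ) ^ ((N : ℤ) - 2) * ((q : ℝ) + 1) ^ 2) • (A * Astar - Astar * A) := by
  have hq0 : (q : ℝ) ≠ 0 := by
    rw [Nat.cast_ne_zero, ← hF]
    exact Fintype.card_ne_zero
  have hq1 : (q : ℝ) ≠ 1 := by
    rw [Nat.cast_ne_one, ← hF]
    exact Fintype.one_lt_card.ne'
  have hA' : A = loweringMatrix F V + raisingMatrix F V q :=
    Matrix.ext fun y z => (hA y z).trans (loweringMatrix_add_raisingMatrix_apply y z).symm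
  have hAstar' : Astar = dualAdjacencyMatrix F V q :=
    Matrix.ext fun y z => by rw [hAstar, dualAdjacencyMatrix, Matrix.diagonal_apply]
  have hRL := raisingMatrix_mul_loweringMatrix (K := F) (V := V)
  rw [Nat.card_eq_fintype_card, hF] at hRL
  rw [hA', hAstar', tridiagonal_relation_of_qCommutation hq0
    (dualAdjacencyMatrix_mul_loweringMatrix hq0) (dualAdjacencyMatrix_mul_raisingMatrix hq0) hRL
    (qCommutatorMatrix_mul_loweringMatrix hq1) (raisingMatrix_mul_qCommutatorMatrix hq1),
    hV, zpow_sub₀ hq0, zpow_natCast]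
  congr 1
  field_simp
end

section
/- The matrices A and A* of L_N(q) satisfy A*³A − (q + q^{-1} + 1)A*²AA* + (q + q^{-1} + 1)A*AA*² − AA*³ = 0. -/
open scoped Classical
open Module

theorem stmt_17 (q N : ℕ) (F : Type*) [Field F] [Fintype F] (hF : Fintype.card F = q)
    (V : Type*) [AddCommGroup V] [Module F V] [FiniteDimensional F V]
    (hV : finrank F V = N) [Fintype (Submodule F V)]
    (A : Matrix (Submodule F V) (Submodule F V) ℝ)
    (hA : ∀ y z : Submodule F V, A y z =
      if z ≤ y ∧ finrank F y = finrank F z + 1 then 1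
      else if y ≤ z ∧ finrank F z = finrank F y + 1 then (q : ℝ) ^ finrank F y
      else 0)
    (Astar : Matrix (Submodule F V) (Submodule F V) ℝ)
    (hAstar : ∀ y z : Submodule F V, Astar y z =
      if y = z then (q : ℝ) ^ (-(finrank F y : ℤ)) else 0) :
    Astar ^ 3 * A - ((q : ℝ) + (q : ℝ)⁻¹ + 1) • (Astar ^ 2 * A * Astar)
      + ((q : ℝ) + (q : ℝ)⁻¹ + 1) • (Astar * A * Astar ^ 2) - A * Astar ^ 3 = 0 := by
  have hq0 : (q : ℝ) ≠ 0 := by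
    have : 0 < q := hF ▸ Fintype.card_pos
    exact_mod_cast this.ne'
  set f : Submodule F V → ℝ := fun y => (q : ℝ) ^ (-(finrank F y : ℤ)) with hf
  have hAs : Astar = Matrix.diagonal f := by
    ext y z
    rw [hAstar, Matrix.diagonal_apply]
  have hstep : ∀ y z : Submodule F V, finrank F y = finrank F z + 1 → f z = q * f y := by
    intro y z h
    simp only [hf, h]
    push_cast
    rw [neg_add, zpow_add₀ hq0]
    field_simp
  have key : ∀ y z : Submodule F V,
      A y z * (f y ^ 3 - ((q : ℝ) + (q : ℝ)⁻¹ + 1) * (f y ^ 2 * f z)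
        + ((q : ℝ) + (q : ℝ)⁻¹ + 1) * (f y * f z ^ 2) - f z ^ 3) = 0 := by
    intro y z
    rw [hA]
    split_ifs with h1 h2
    · rw [hstep y z h1.2]
      field_simp
      ring
    · rw [hstep z y h2.2]
      field_simp
      ring
    · ring
  ext y z
  have h3 : Astar ^ 3 = Matrix.diagonal (fun i => f i ^ 3) := by
    rw [hAs, Matrix.diagonal_pow]; rfl
  have h2 : Astar ^ 2 = Matrix.diagonal (fun i => f i ^ 2) := by
    rw [hAs, Matrix.diagonal_pow]; rfl
  rw [h3, h2, hAs]
  simp only [Matrix.sub_apply, Matrix.add_apply, Matrix.smul_apply,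
    Matrix.zero_apply, Matrix.diagonal_mul, Matrix.mul_diagonal, smul_eq_mul]
  linear_combination key y z
end
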